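/- arXiv:2603.15099 — 2 statements merged into one kernel-verified Lean document; each statement's English description precedes it below -/
import Mathlib

section
/- For every structure and every formula φ: ‖φ‖ ⊆ ‖gen(φ)‖, and the complement of ‖φ‖ is contained in ‖cogen(φ)‖. -/
/-- First-order formulas over relation symbols `R` with arities `δ` and variables `𝒳`. -/
inductive Fml (R : Type) (δ : R → ℕ) (𝒳 : Type) : Type
  | one : Fml R δ 𝒳
  | rel (r : R) (x : Fin (δ r) → 𝒳) : Fml R δ 𝒳
  | eql (x y : 𝒳) : Fml R δ 𝒳
  | not (φ : Fml R δ 𝒳) : Fml R δ 𝒳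
  | and (φ ψ : Fml R δ 𝒳) : Fml R δ 𝒳
  | or (φ ψ : Fml R δ 𝒳) : Fml R δ 𝒳
  | ex (x : 𝒳) (φ : Fml R δ 𝒳) : Fml R δ 𝒳

variable {R : Type} {δ : R → ℕ} {𝒳 : Type}

/-- The value `‖φ‖` of a formula in the structure with domain `M` and interpretation `I`. -/
def val {M : Type} (I : ∀ r : R, Set (Fin (δ r) → M)) : Fml R δ 𝒳 → Set (𝒳 → M)
  | .one => Set.univ
  | .rel r x => {v | (fun i => v (x i)) ∈ I r}
  | .eql x y => {v | v x = v y}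
  | .not φ => (val I φ)ᶜ
  | .and φ ψ => val I φ ∩ val I ψ
  | .or φ ψ => val I φ ∪ val I ψ
  | .ex x φ => {v | ∃ u ∈ val I φ, ∀ y ≠ x, u y = v y}

/-- Free variables of a formula. -/
def FV [DecidableEq 𝒳] [Fintype 𝒳] : Fml R δ 𝒳 → Finset 𝒳
  | .one => ∅
  | .rel _ x => Finset.univ.image x
  | .eql x y => {x, y}
  | .not φ => FV φ
  | .and φ ψ => FV φ ∪ FV ψ
  | .or φ ψ => FV φ ∪ FV ψ
  | .ex x φ => FV φ \ {x}

/-- The identity relation on `𝒳` (as a set of pairs). -/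
def idRel' : Set (𝒳 × 𝒳) := {p | p.1 = p.2}

/-- `EqGen R₀`: the smallest equivalence relation on `𝒳` containing `R₀`. -/
def EqGen (R₀ : Set (𝒳 × 𝒳)) : Set (𝒳 × 𝒳) :=
  {p | Relation.EqvGen (fun a b => (a, b) ∈ R₀) p.1 p.2}

/-- `(𝒳∖{x}) × (𝒳∖{x})` as a set of pairs. -/
def offDiag (x : 𝒳) : Set (𝒳 × 𝒳) := {p | p.1 ≠ x ∧ p.2 ≠ x}

/-- The pair `(eq(φ), coeq(φ))` of the equality and coequality equivalences of `φ`. -/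
def eqco : Fml R δ 𝒳 → Set (𝒳 × 𝒳) × Set (𝒳 × 𝒳)
  | .one => (idRel', idRel')
  | .rel _ _ => (idRel', idRel')
  | .eql x y => (EqGen {(x, y)}, idRel')
  | .not φ => ((eqco φ).2, (eqco φ).1)
  | .and φ ψ => (EqGen ((eqco φ).1 ∪ (eqco ψ).1), (eqco φ).2 ∩ (eqco ψ).2)
  | .or φ ψ => ((eqco φ).1 ∩ (eqco ψ).1, EqGen ((eqco φ).2 ∪ (eqco ψ).2))
  | .ex x φ => (EqGen ((eqco φ).1 ∩ offDiag x), EqGen ((eqco φ).2 ∩ offDiag x))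

/-- `eq(φ)`. -/
def eqR (φ : Fml R δ 𝒳) : Set (𝒳 × 𝒳) := (eqco φ).1

/-- `coeq(φ)`. -/
def coeqR (φ : Fml R δ 𝒳) : Set (𝒳 × 𝒳) := (eqco φ).2

/-- `cl_E(X)`. -/
def clE (E : Set (𝒳 × 𝒳)) (X : Set 𝒳) : Set 𝒳 := {y | ∃ x ∈ X, (x, y) ∈ E}

/-- The pair `(gen₀(φ), cogen₀(φ))`. -/
def genco0 : Fml R δ 𝒳 → Set 𝒳 × Set 𝒳
  | .one => (∅, ∅)
  | .rel _ x => (Set.range x, ∅)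
  | .eql _ _ => (∅, ∅)
  | .not φ => ((genco0 φ).2, (genco0 φ).1)
  | .and φ ψ =>
      (clE (eqR (φ.and ψ)) ((genco0 φ).1 ∪ (genco0 ψ).1),
       (genco0 φ).2 ∩ (genco0 ψ).2)
  | .or φ ψ =>
      ((genco0 φ).1 ∩ (genco0 ψ).1,
       clE (EqGen (coeqR φ ∪ coeqR ψ)) ((genco0 φ).2 ∪ (genco0 ψ).2))
  | .ex x φ => ((genco0 φ).1 \ {x}, (genco0 φ).2 \ {x})

/-- `gen₀(φ)`. -/
def gen0 (φ : Fml R δ 𝒳) : Set 𝒳 := (genco0 φ).1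

/-- `cogen₀(φ)`. -/
def cogen0 (φ : Fml R δ 𝒳) : Set 𝒳 := (genco0 φ).2

/-- Every subformula of the form `(∃x)ψ` satisfies `x ∈ gen₀(ψ)`. -/
def ExOK : Fml R δ 𝒳 → Prop
  | .one => True
  | .rel _ _ => True
  | .eql _ _ => True
  | .not φ => ExOK φ
  | .and φ ψ => ExOK φ ∧ ExOK ψ
  | .or φ ψ => ExOK φ ∧ ExOK ψ
  | .ex x φ => x ∈ gen0 φ ∧ ExOK φ

/-- A formula is allowed if `FV(φ) = gen₀(φ)` and every existential subformula
`(∃x)ψ` satisfies `x ∈ gen₀(ψ)`. -/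
def Allowed [DecidableEq 𝒳] [Fintype 𝒳] (φ : Fml R δ 𝒳) : Prop :=
  (↑(FV φ) : Set 𝒳) = gen0 φ ∧ ExOK φ

/-- Positive formulas (`φ∨ψ` read as `¬(¬φ∧¬ψ)`). -/
def Positive : Fml R δ 𝒳 → Prop
  | .one => True
  | .rel _ _ => True
  | .eql _ _ => True
  | .not φ => ¬ Positive φ
  | .and φ ψ => Positive φ ∨ Positive ψ
  | .or φ ψ => Positive φ ∧ Positive ψ
  | .ex _ φ => Positive φ

/-- The diagonal `D_{x,y}`. -/
def diag {M : Type} (x y : 𝒳) : Set (𝒳 → M) := {v | v x = v y}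

section Gen

variable [Fintype 𝒳] [LinearOrder 𝒳]

/-- `(∃S)φ`: existential quantification over all variables of `S`, taken in
increasing order. -/
def exAll (S : Finset 𝒳) (φ : Fml R δ 𝒳) : Fml R δ 𝒳 :=
  (S.sort (· ≤ ·)).foldr .ex φ

/-- `φ ∨* ψ = (∃ FV(φ)∖FV(ψ))φ ∨ (∃ FV(ψ)∖FV(φ))ψ`. -/
def orStar (φ ψ : Fml R δ 𝒳) : Fml R δ 𝒳 :=
  .or (exAll (FV φ \ FV ψ) φ) (exAll (FV ψ \ FV φ) ψ)

/-- The conjunction `(x₁≈y₁)∧⋯∧(xₙ≈yₙ)` over a list of pairs, `1` if empty. -/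
def conjList : List (𝒳 × 𝒳) → Fml R δ 𝒳
  | [] => .one
  | p :: ps => ps.foldl (fun acc q => .and acc (.eql q.1 q.2)) (.eql p.1 p.2)

/-- The set of pairs occurring in a list. -/
def pairsOf (l : List (𝒳 × 𝒳)) : Set (𝒳 × 𝒳) := {p | p ∈ l}

/-- `rep` assigns to every equivalence relation on `𝒳` a minimal representation:
a list of pairs, minimal under inclusion, generating the equivalence. -/
def MinRep (rep : Set (𝒳 × 𝒳) → List (𝒳 × 𝒳)) : Prop :=
  ∀ E : Set (𝒳 × 𝒳), Equivalence (fun a b => (a, b) ∈ E) →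
    EqGen (pairsOf (rep E)) = E ∧
    ∀ R₀ ⊆ pairsOf (rep E), EqGen R₀ = E → R₀ = pairsOf (rep E)

variable (rep : Set (𝒳 × 𝒳) → List (𝒳 × 𝒳))

/-- The pair `(gen(φ), cogen(φ))` of the generator and cogenerator of `φ`.
In the conjunction case, `φ ≈∧ ψ` is the conjunction of equalities over
`rep(Eq(eq(φ∧ψ) ∖ eq(gen(φ)∧gen(ψ))))`. -/
def genco : Fml R δ 𝒳 → Fml R δ 𝒳 × Fml R δ 𝒳
  | .one => (.one, .one)
  | .rel r x => (.rel r x, .one)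
  | .eql _ _ => (.one, .one)
  | .not φ => ((genco φ).2, (genco φ).1)
  | .and φ ψ =>
      (.and (.and (genco φ).1 (genco ψ).1)
        (conjList (rep (EqGen (eqR (φ.and ψ) \ eqR ((genco φ).1.and (genco ψ).1))))),
       orStar (genco φ).2 (genco ψ).2)
  | .or φ ψ =>
      (orStar (genco φ).1 (genco ψ).1,
       .and (.and (genco φ).2 (genco ψ).2)
        (conjList (rep (EqGen (eqR ((Fml.not φ).and (Fml.not ψ)) \
          eqR ((genco φ).2.and (genco ψ).2))))))
  | .ex x φ => (.ex x (genco φ).1, .ex x (genco φ).2)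

/-- `gen(φ)`. -/
def gen (φ : Fml R δ 𝒳) : Fml R δ 𝒳 := (genco rep φ).1

/-- `cogen(φ)`. -/
def cogen (φ : Fml R δ 𝒳) : Fml R δ 𝒳 := (genco rep φ).2

end Gen

section Aux

variable {R : Type} {δ : R → ℕ} {𝒳 : Type}

lemma eqGen_sub {M : Type} {S : Set (𝒳 × 𝒳)} {f : 𝒳 → M}
    (h : ∀ a b, (a, b) ∈ S → f a = f b) :
    ∀ a b, (a, b) ∈ EqGen S → f a = f b := by
  intro a b hab
  have hab' : Relation.EqvGen (fun a b => (a, b) ∈ S) a b := hab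
  clear hab
  induction hab' with
  | rel _ _ h' => exact h _ _ h'
  | refl => rfl
  | symm _ _ _ ih => exact ih.symm
  | trans _ _ _ _ _ ih1 ih2 => exact ih1.trans ih2

lemma key_eq {M : Type} (I : ∀ r : R, Set (Fin (δ r) → M)) (φ : Fml R δ 𝒳)
    (v : 𝒳 → M) :
    (v ∈ val I φ → ∀ a b, (a, b) ∈ eqR φ → v a = v b) ∧
    (v ∉ val I φ → ∀ a b, (a, b) ∈ coeqR φ → v a = v b) := by
  induction φ generalizing v with
  | one =>
    exact ⟨fun _ a b h => congrArg v h, fun hv => absurd trivial hv⟩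
  | rel r x =>
    exact ⟨fun _ a b h => congrArg v h, fun _ a b h => congrArg v h⟩
  | eql x y =>
    constructor
    · intro hv
      apply eqGen_sub
      rintro a b (h : (a, b) ∈ ({(x, y)} : Set _))
      simp only [Set.mem_singleton_iff, Prod.mk.injEq] at h
      rw [h.1, h.2]; exact hv
    · exact fun _ a b h => congrArg v h
  | not φ ih =>
    exact ⟨fun hv => (ih v).2 hv, fun hv => (ih v).1 (not_not.mp hv)⟩
  | and φ ψ ihφ ihψ =>
    constructor
    · intro hv
      apply eqGen_sub
      rintro a b (h | h)
      · exact (ihφ v).1 hv.1 a b h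
      · exact (ihψ v).1 hv.2 a b h
    · intro hv a b hab
      rcases not_and_or.mp hv with h | h
      · exact (ihφ v).2 h a b hab.1
      · exact (ihψ v).2 h a b hab.2
  | or φ ψ ihφ ihψ =>
    constructor
    · intro hv a b hab
      rcases hv with h | h
      · exact (ihφ v).1 h a b hab.1
      · exact (ihψ v).1 h a b hab.2
    · intro hv
      have hv' : v ∉ val I φ ∧ v ∉ val I ψ := not_or.mp hv
      apply eqGen_sub
      rintro a b (h | h)
      · exact (ihφ v).2 hv'.1 a b h
      · exact (ihψ v).2 hv'.2 a b h
  | ex x φ ih =>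
    constructor
    · intro hv
      obtain ⟨u, hu, hagree⟩ := hv
      apply eqGen_sub
      rintro a b ⟨h, ha, hb⟩
      rw [← hagree a ha, ← hagree b hb]
      exact (ih u).1 hu a b h
    · intro hv
      have hvφ : v ∉ val I φ := fun h => hv ⟨v, h, fun _ _ => rfl⟩
      apply eqGen_sub
      rintro a b ⟨h, _, _⟩
      exact (ih v).2 hvφ a b h

lemma val_foldr_ex {M : Type} (I : ∀ r : R, Set (Fin (δ r) → M))
    (l : List 𝒳) (φ : Fml R δ 𝒳) :
    val I φ ⊆ val I (l.foldr .ex φ) := by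
  induction l with
  | nil => exact fun _ h => h
  | cons x xs ih =>
    intro v hv
    exact ⟨v, ih hv, fun _ _ => rfl⟩

lemma val_exAll {M : Type} [Fintype 𝒳] [LinearOrder 𝒳]
    (I : ∀ r : R, Set (Fin (δ r) → M)) (S : Finset 𝒳) (φ : Fml R δ 𝒳) :
    val I φ ⊆ val I (exAll S φ) :=
  val_foldr_ex I _ φ

lemma val_conjList {M : Type} (I : ∀ r : R, Set (Fin (δ r) → M))
    (l : List (𝒳 × 𝒳)) (v : 𝒳 → M) (h : ∀ p ∈ l, v p.1 = v p.2) :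
    v ∈ val I (conjList l) := by
  cases l with
  | nil => trivial
  | cons p ps =>
    have base : v ∈ val I (Fml.eql p.1 p.2 : Fml R δ 𝒳) :=
      h p List.mem_cons_self
    have hps : ∀ q ∈ ps, v q.1 = v q.2 := fun q hq => h q (List.mem_cons_of_mem _ hq)
    clear h
    show v ∈ val I (ps.foldl (fun acc q => .and acc (.eql q.1 q.2)) (.eql p.1 p.2))
    generalize hacc : (Fml.eql p.1 p.2 : Fml R δ 𝒳) = acc at base
    clear hacc
    induction ps generalizing acc with
    | nil => exact base
    | cons q qs ih =>
      exact ih (fun r hr => hps r (List.mem_cons_of_mem _ hr))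
        _ ⟨base, hps q List.mem_cons_self⟩

lemma val_rep_conj {M : Type} [Fintype 𝒳] [LinearOrder 𝒳]
    (rep : Set (𝒳 × 𝒳) → List (𝒳 × 𝒳)) (hrep : MinRep rep)
    (I : ∀ r : R, Set (Fin (δ r) → M)) (S : Set (𝒳 × 𝒳)) (v : 𝒳 → M)
    (h : ∀ a b, (a, b) ∈ S → v a = v b) :
    v ∈ val I (conjList (rep (EqGen S)) : Fml R δ 𝒳) := by
  have hE : Equivalence (fun a b => (a, b) ∈ EqGen S) :=
    ⟨fun a => Relation.EqvGen.refl a, fun h => Relation.EqvGen.symm _ _ h,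
     fun h1 h2 => Relation.EqvGen.trans _ _ _ h1 h2⟩
  obtain ⟨hgen, _⟩ := hrep (EqGen S) hE
  apply val_conjList
  intro p hp
  have hpE : (p.1, p.2) ∈ EqGen S := by
    rw [← hgen]; exact Relation.EqvGen.rel _ _ hp
  exact eqGen_sub h p.1 p.2 hpE

end Aux

theorem stmt15 {R : Type} [Fintype R] {δ : R → ℕ} {𝒳 : Type} [Fintype 𝒳]
    [LinearOrder 𝒳] (rep : Set (𝒳 × 𝒳) → List (𝒳 × 𝒳)) (hrep : MinRep rep)
    (M : Type) [Fintype M] [Nonempty M] (I : ∀ r : R, Set (Fin (δ r) → M))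
    (φ : Fml R δ 𝒳) :
    val I φ ⊆ val I (gen rep φ) ∧ (val I φ)ᶜ ⊆ val I (cogen rep φ) := by
  induction φ with
  | one =>
    exact ⟨fun _ h => h, fun _ h => trivial⟩
  | rel r x =>
    exact ⟨fun _ h => h, fun _ _ => trivial⟩
  | eql x y =>
    exact ⟨fun _ _ => trivial, fun _ _ => trivial⟩
  | not φ ih =>
    exact ⟨ih.2, by simpa [gen, cogen, genco, val] using ih.1⟩
  | and φ ψ ihφ ihψ =>
    constructor
    · intro v hv
      refine ⟨⟨ihφ.1 hv.1, ihψ.1 hv.2⟩, ?_⟩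
      apply val_rep_conj rep hrep
      intro a b hab
      exact (key_eq I (φ.and ψ) v).1 hv a b hab.1
    · intro v hv
      rcases not_and_or.mp hv with h | h
      · exact Or.inl (val_exAll I _ _ (ihφ.2 h))
      · exact Or.inr (val_exAll I _ _ (ihψ.2 h))
  | or φ ψ ihφ ihψ =>
    constructor
    · rintro v (h | h)
      · exact Or.inl (val_exAll I _ _ (ihφ.1 h))
      · exact Or.inr (val_exAll I _ _ (ihψ.1 h))
    · intro v hv
      have hv' : v ∉ val I φ ∧ v ∉ val I ψ := not_or.mp hv
      refine ⟨⟨ihφ.2 hv'.1, ihψ.2 hv'.2⟩, ?_⟩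
      apply val_rep_conj rep hrep
      intro a b hab
      exact (key_eq I ((Fml.not φ).and (Fml.not ψ)) v).1 ⟨hv'.1, hv'.2⟩ a b hab.1
  | ex x φ ih =>
    constructor
    · rintro v ⟨u, hu, hagree⟩
      exact ⟨u, ih.1 hu, hagree⟩
    · intro v hv
      have hvφ : v ∉ val I φ := fun h => hv ⟨v, h, fun _ _ => rfl⟩
      exact ⟨v, ih.2 hvφ, fun _ _ => rfl⟩
end

section
/- Let φ be an allowed formula and ψ a normalized formula with FV(ψ) = FV(φ). Then in every database, ‖norm(φ,ψ)‖ ∩ ‖ψ‖ = ‖φ‖ ∩ ‖ψ‖. -/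
variable {R : Type} {δ : R → ℕ} {𝒳 : Type}

/-- The substitution `(χ)[u/w] = (∃u)(χ ∧ (u ≈ w))`. -/
def subst (χ : Fml R δ 𝒳) (u w : 𝒳) : Fml R δ 𝒳 := .ex u (.and χ (.eql u w))

/-- Iterated substitution `(χ)[u₁/w₁,…,u_k/w_k]`, applied left to right. -/
def substFold (χ : Fml R δ 𝒳) (l : List (𝒳 × 𝒳)) : Fml R δ 𝒳 :=
  l.foldl (fun acc p => subst acc p.1 p.2) χ

/-- A formula is negated if it is of the form `¬φ₁`. -/
def isNeg : Fml R δ 𝒳 → Bool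
  | .not _ => true
  | _ => false

/-- The complement `φ̄` of a formula: `φ₁` if `φ = ¬φ₁`, and `¬φ` otherwise. -/
def compl : Fml R δ 𝒳 → Fml R δ 𝒳
  | .not φ => φ
  | φ => .not φ

section Norm

variable [Fintype 𝒳] [LinearOrder 𝒳]

/-- Alignment of `φ` via `ψ` (for `FV(φ) ⊆ FV(ψ)`): `φ` itself if
`FV(φ) = FV(ψ)`, and `φ ∧ (∃FV(φ))ψ` otherwise. -/
def align (φ ψ : Fml R δ 𝒳) : Fml R δ 𝒳 :=
  if FV φ = FV ψ then φ else .and φ (exAll (FV φ) ψ)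

variable (rep : Set (𝒳 × 𝒳) → List (𝒳 × 𝒳))
variable (Y : ∀ r : R, Fin (δ r) → 𝒳) (Z : ∀ r : R, (Fin (δ r) → 𝒳) → Fin (δ r) → 𝒳)

/-- For an `n`-ary relation symbol `r` with canonical variables `y₁ʳ,…,yₙʳ` and
variables `x₁,…,xₙ`, the auxiliary variables `z₁,…,zₙ = Z r x` are pairwise
distinct and disjoint from `{y₁ʳ,…,yₙʳ, x₁,…,xₙ}`. -/
def GoodZ : Prop :=
  ∀ (r : R) (x : Fin (δ r) → 𝒳),
    Function.Injective (Z r x) ∧ (∀ i j, Z r x i ≠ Y r j) ∧ (∀ i j, Z r x i ≠ x j)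

/-- The canonical relation formula
`r(y₁ʳ/x₁,…,yₙʳ/xₙ) = (r(y₁ʳ,…,yₙʳ))[y₁ʳ/z₁,…,yₙʳ/zₙ, z₁/x₁,…,zₙ/xₙ]`. -/
def canonAtom (r : R) (x : Fin (δ r) → 𝒳) : Fml R δ 𝒳 :=
  substFold (.rel r (Y r))
    ((List.ofFn fun i => (Y r i, Z r x i)) ++ (List.ofFn fun i => (Z r x i, x i)))

/-- Combination of the two normalized conjuncts `α₁`, `α₂` (with parameter `ψ`)
in the conjunction case of the normalization. -/
def normAnd (α₁ α₂ ψ : Fml R δ 𝒳) : Fml R δ 𝒳 :=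
  if isNeg α₁ then
    if isNeg α₂ then .not (.or (align (compl α₁) ψ) (align (compl α₂) ψ))
    else .and (align α₂ ψ) (.not (align (compl α₁) ψ))
  else
    if isNeg α₂ then .and (align α₁ ψ) (.not (align (compl α₂) ψ))
    else .and α₁ α₂

/-- The normalization `norm(φ,ψ)` (`φ₁∨φ₂` is treated as `¬(¬φ₁∧¬φ₂)`). -/
def norm : Fml R δ 𝒳 → Fml R δ 𝒳 → Fml R δ 𝒳
  | .one, _ => .one
  | .rel r x, _ => canonAtom Y Z r x
  | .eql x₁ x₂, ψ => .and ψ (.eql x₁ x₂)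
  | .not φ₁, ψ => compl (norm φ₁ ψ)
  | .and φ₁ φ₂, ψ =>
      normAnd (norm φ₁ (exAll (FV ψ \ FV φ₁) ψ)) (norm φ₂ (exAll (FV ψ \ FV φ₂) ψ)) ψ
  | .or φ₁ φ₂, ψ =>
      compl (normAnd (compl (norm φ₁ (exAll (FV ψ \ FV φ₁) ψ)))
        (compl (norm φ₂ (exAll (FV ψ \ FV φ₂) ψ))) ψ)
  | .ex x φ₁, ψ =>
      .ex x (norm φ₁ (.and (exAll (FV (gen rep φ₁) \ {x}) (gen rep φ₁)) ψ))

/-- Normalized formulas. -/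
inductive Normalized : Fml R δ 𝒳 → Prop
  | one : Normalized .one
  | atom (r : R) : Normalized (.rel r (Y r))
  | eqc {φ : Fml R δ 𝒳} (x y : 𝒳) : Normalized φ → x ∈ FV φ →
      Normalized (.and φ (.eql x y))
  | andNot {φ ψ : Fml R δ 𝒳} : Normalized φ → Normalized ψ → FV φ = FV ψ →
      Normalized (.and φ (.not ψ))
  | orc {φ ψ : Fml R δ 𝒳} : Normalized φ → Normalized ψ → FV φ = FV ψ →
      Normalized (.or φ ψ)
  | andc {φ ψ : Fml R δ 𝒳} : Normalized φ → Normalized ψ → Normalized (.and φ ψ)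
  | exc {φ : Fml R δ 𝒳} (x : 𝒳) : Normalized φ → Normalized (.ex x φ)

end Norm

section Lemmas

open Fml

variable {M : Type} {I : ∀ r : R, Set (Fin (δ r) → M)}

/-! ### EqGen basics -/

theorem mem_EqGen_base {A : Set (𝒳 × 𝒳)} {p : 𝒳 × 𝒳} (h : p ∈ A) : p ∈ EqGen A := by
  have : ((p.1, p.2) : 𝒳 × 𝒳) ∈ A := by simpa using h
  exact Relation.EqvGen.rel _ _ this

theorem EqGen_sub_base {A : Set (𝒳 × 𝒳)} : A ⊆ EqGen A := fun _ h => mem_EqGen_base h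

theorem EqGen_mono {A B : Set (𝒳 × 𝒳)} (h : A ⊆ B) : EqGen A ⊆ EqGen B := by
  intro p hp
  exact Relation.EqvGen.mono (fun a b hab => h hab) _ _ hp

theorem EqGen_equivalence (A : Set (𝒳 × 𝒳)) :
    Equivalence (fun a b : 𝒳 => (a, b) ∈ EqGen A) :=
  Relation.EqvGen.is_equivalence _

theorem EqGen_le {A E : Set (𝒳 × 𝒳)} (hE : Equivalence (fun a b : 𝒳 => (a, b) ∈ E))
    (h : A ⊆ E) : EqGen A ⊆ E := by
  intro p hp
  have : ∀ a b : 𝒳, Relation.EqvGen (fun a b => (a, b) ∈ A) a b → (a, b) ∈ E := by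
    intro a b hab
    induction hab with
    | rel a b hr => exact h hr
    | refl a => exact hE.refl a
    | symm a b _ ih => exact hE.symm ih
    | trans a b c _ _ ih1 ih2 => exact hE.trans ih1 ih2
  simpa using this p.1 p.2 hp

theorem EqGen_of_equiv {E : Set (𝒳 × 𝒳)} (hE : Equivalence (fun a b : 𝒳 => (a, b) ∈ E)) :
    EqGen E = E :=
  le_antisymm (EqGen_le hE le_rfl) EqGen_sub_base

theorem EqGen_idem (A : Set (𝒳 × 𝒳)) : EqGen (EqGen A) = EqGen A :=
  EqGen_of_equiv (EqGen_equivalence A)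

theorem EqGen_le_EqGen {A B : Set (𝒳 × 𝒳)} (h : A ⊆ EqGen B) : EqGen A ⊆ EqGen B := by
  have := EqGen_mono h
  rwa [EqGen_idem] at this

theorem idRel'_equivalence : Equivalence (fun a b : 𝒳 => (a, b) ∈ idRel') := by
  constructor
  · intro a; rfl
  · intro a b h; exact (h : a = b).symm
  · intro a b c h1 h2; exact (h1 : a = b).trans h2

theorem EqGen_le_id {A : Set (𝒳 × 𝒳)} (h : A ⊆ idRel') : EqGen A = idRel' := by
  refine le_antisymm (EqGen_le idRel'_equivalence h) ?_
  intro p hp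
  have hp' : p.1 = p.2 := hp
  show Relation.EqvGen _ p.1 p.2
  rw [← hp']
  exact Relation.EqvGen.refl p.1

theorem EqGen_empty : EqGen (∅ : Set (𝒳 × 𝒳)) = idRel' :=
  EqGen_le_id (Set.empty_subset _)

theorem EqGen_diag {S : Set (𝒳 → M)} {A : Set (𝒳 × 𝒳)}
    (h : ∀ p ∈ A, S ⊆ diag p.1 p.2) : ∀ p ∈ EqGen A, S ⊆ diag p.1 p.2 := by
  intro p hp
  have : ∀ a b : 𝒳, Relation.EqvGen (fun a b => (a, b) ∈ A) a b →
      S ⊆ (diag a b : Set (𝒳 → M)) := by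
    intro a b hab
    induction hab with
    | rel a b hr => exact h (a, b) hr
    | refl a => intro v _; rfl
    | symm a b _ ih => intro v hv; exact (ih hv).symm
    | trans a b c _ _ ih1 ih2 => intro v hv; exact (ih1 hv).trans (ih2 hv)
  exact this p.1 p.2 hp

theorem EqGen_nt {X : Set 𝒳} {A : Set (𝒳 × 𝒳)}
    (h : ∀ p ∈ A, p.1 ≠ p.2 → p.1 ∈ X ∧ p.2 ∈ X) :
    ∀ p ∈ EqGen A, p.1 ≠ p.2 → p.1 ∈ X ∧ p.2 ∈ X := by
  intro p hp
  have : ∀ a b : 𝒳, Relation.EqvGen (fun a b => (a, b) ∈ A) a b →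
      a = b ∨ (a ∈ X ∧ b ∈ X) := by
    intro a b hab
    induction hab with
    | rel a b hr =>
      by_cases hab : a = b
      · exact Or.inl hab
      · exact Or.inr (h (a, b) hr hab)
    | refl a => exact Or.inl rfl
    | symm a b _ ih => rcases ih with h | h; exacts [Or.inl h.symm, Or.inr ⟨h.2, h.1⟩]
    | trans a b c _ _ ih1 ih2 =>
      rcases ih1 with h1 | h1
      · rwa [h1]
      · rcases ih2 with h2 | h2
        · exact Or.inr ⟨h1.1, h2 ▸ h1.2⟩
        · exact Or.inr ⟨h1.1, h2.2⟩
  intro hne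
  rcases this p.1 p.2 hp with h | h
  · exact absurd h hne
  · exact h

/-! ### val basics -/

theorem val_one : val I (.one : Fml R δ 𝒳) = Set.univ := rfl
theorem val_not (φ : Fml R δ 𝒳) : val I φ.not = (val I φ)ᶜ := rfl
theorem val_and (φ ψ : Fml R δ 𝒳) : val I (φ.and ψ) = val I φ ∩ val I ψ := rfl
theorem val_or (φ ψ : Fml R δ 𝒳) : val I (φ.or ψ) = val I φ ∪ val I ψ := rfl
theorem val_eql (x y : 𝒳) : val I (.eql x y : Fml R δ 𝒳) = {v | v x = v y} := rfl

theorem val_agree_mp [DecidableEq 𝒳] [Fintype 𝒳] :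
    ∀ (φ : Fml R δ 𝒳) (u v : 𝒳 → M), (∀ y ∈ FV φ, u y = v y) →
      u ∈ val I φ → v ∈ val I φ := by
  intro φ
  induction φ with
  | one => intro u v _ _; trivial
  | rel r x =>
    intro u v h hu
    have : (fun i => v (x i)) = fun i => u (x i) := by
      funext i
      exact (h (x i) (Finset.mem_image_of_mem x (Finset.mem_univ i))).symm
    show (fun i => v (x i)) ∈ I r
    rw [this]; exact hu
  | eql x y =>
    intro u v h hu
    have hx : u x = v x := h x (by simp [FV])
    have hy : u y = v y := h y (by simp [FV])
    show v x = v y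
    rw [← hx, ← hy]; exact hu
  | not φ ih =>
    intro u v h hu hv
    exact hu (ih v u (fun y hy => (h y hy).symm) hv)
  | and φ ψ ih1 ih2 =>
    intro u v h hu
    exact ⟨ih1 u v (fun y hy => h y (by simp [FV, hy])) hu.1,
           ih2 u v (fun y hy => h y (by simp [FV, hy])) hu.2⟩
  | or φ ψ ih1 ih2 =>
    intro u v h hu
    rcases hu with hu | hu
    · exact Or.inl (ih1 u v (fun y hy => h y (by simp [FV, hy])) hu)
    · exact Or.inr (ih2 u v (fun y hy => h y (by simp [FV, hy])) hu)
  | ex x φ ih =>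
    intro u v h hu
    obtain ⟨w, hw, hwagree⟩ := hu
    refine ⟨fun y => if y = x then w x else v y, ?_, ?_⟩
    · refine ih w _ ?_ hw
      intro y hy
      by_cases hyx : y = x
      · simp [hyx]
      · have hyFV : y ∈ FV (Fml.ex x φ) := by
          show y ∈ FV φ \ ({x} : Finset 𝒳)
          simp [hy, hyx]
        rw [if_neg hyx, hwagree y hyx]
        exact h y hyFV
    · intro y hy; simp [if_neg hy]

theorem val_agree [DecidableEq 𝒳] [Fintype 𝒳] (φ : Fml R δ 𝒳) {u v : 𝒳 → M}
    (h : ∀ y ∈ FV φ, u y = v y) : u ∈ val I φ ↔ v ∈ val I φ :=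
  ⟨val_agree_mp φ u v h, val_agree_mp φ v u (fun y hy => (h y hy).symm)⟩

theorem val_le_ex (x : 𝒳) (φ : Fml R δ 𝒳) : val I φ ⊆ val I (.ex x φ) :=
  fun v hv => ⟨v, hv, fun _ _ => rfl⟩

theorem val_le_foldr (l : List 𝒳) (φ : Fml R δ 𝒳) :
    val I φ ⊆ val I (l.foldr .ex φ) := by
  induction l with
  | nil => exact le_rfl
  | cons x l ih => exact ih.trans (val_le_ex x _)

theorem val_le_exAll [Fintype 𝒳] [LinearOrder 𝒳] (S : Finset 𝒳) (φ : Fml R δ 𝒳) :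
    val I φ ⊆ val I (exAll S φ) := val_le_foldr _ _

theorem val_exAll_univ [Fintype 𝒳] [LinearOrder 𝒳] {S : Finset 𝒳} {φ : Fml R δ 𝒳}
    (h : val I φ = Set.univ) : val I (exAll S φ) = Set.univ :=
  Set.eq_univ_of_univ_subset (h ▸ val_le_exAll S φ)

theorem FV_foldr_ex [DecidableEq 𝒳] [Fintype 𝒳] (l : List 𝒳) (φ : Fml R δ 𝒳) :
    FV (l.foldr .ex φ) = FV φ \ l.toFinset := by
  induction l with
  | nil => simp
  | cons x l ih =>
    show FV (Fml.ex x (l.foldr .ex φ)) = _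
    rw [show FV (Fml.ex x (l.foldr .ex φ)) = FV (l.foldr .ex φ) \ {x} from rfl, ih]
    ext a
    simp only [Finset.mem_sdiff, Finset.mem_singleton, List.toFinset_cons, Finset.mem_insert,
      List.mem_toFinset]
    tauto

theorem FV_exAll [Fintype 𝒳] [LinearOrder 𝒳] (S : Finset 𝒳) (φ : Fml R δ 𝒳) :
    FV (exAll S φ) = FV φ \ S := by
  rw [exAll, FV_foldr_ex]
  congr 1
  exact Finset.sort_toFinset _ _

/-! ### compl, isNeg -/

theorem compl_not' (φ : Fml R δ 𝒳) : _root_.compl (.not φ) = φ := rfl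

theorem val_compl (φ : Fml R δ 𝒳) : val I (_root_.compl φ) = (val I φ)ᶜ := by
  cases φ
  case not φ => exact (compl_compl _).symm
  all_goals rfl

theorem compl_of_isNeg_false {φ : Fml R δ 𝒳} (h : isNeg φ = false) :
    _root_.compl φ = .not φ := by
  cases φ <;> first | rfl | simp [isNeg] at h

theorem isNeg_true_iff {φ : Fml R δ 𝒳} : isNeg φ = true ↔ ∃ ψ, φ = .not ψ := by
  cases φ <;> simp [isNeg]

theorem isNeg_compl_of_false {φ : Fml R δ 𝒳} (h : isNeg φ = false) :
    isNeg (_root_.compl φ) = true := by rw [compl_of_isNeg_false h]; rfl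

end Lemmas
section Lemmas2

open Fml

variable {M : Type} {I : ∀ r : R, Set (Fin (δ r) → M)}

/-! ### align and normAnd -/

theorem val_align_le [Fintype 𝒳] [LinearOrder 𝒳] (γ ψ : Fml R δ 𝒳) :
    val I (align γ ψ) ⊆ val I γ := by
  unfold align; split
  · exact le_rfl
  · exact Set.inter_subset_left

theorem mem_align [Fintype 𝒳] [LinearOrder 𝒳] {γ ψ : Fml R δ 𝒳} {v : 𝒳 → M}
    (hv : v ∈ val I ψ) : v ∈ val I (align γ ψ) ↔ v ∈ val I γ := by
  unfold align; split
  · exact Iff.rfl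
  · exact ⟨fun h => h.1, fun h => ⟨h, val_le_exAll _ _ hv⟩⟩

theorem mem_normAnd [Fintype 𝒳] [LinearOrder 𝒳] {α β ψ : Fml R δ 𝒳} {v : 𝒳 → M}
    (hv : v ∈ val I ψ) :
    v ∈ val I (normAnd α β ψ) ↔ (v ∈ val I α ∧ v ∈ val I β) := by
  unfold normAnd
  split_ifs with h1 h2 h2
  · rw [val_not, Set.mem_compl_iff, val_or, Set.mem_union, mem_align hv, mem_align hv,
      val_compl, val_compl, Set.mem_compl_iff, Set.mem_compl_iff]
    tauto
  · rw [val_and, Set.mem_inter_iff, mem_align hv, val_not, Set.mem_compl_iff, mem_align hv,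
      val_compl, Set.mem_compl_iff]
    tauto
  · rw [val_and, Set.mem_inter_iff, mem_align hv, val_not, Set.mem_compl_iff, mem_align hv,
      val_compl, Set.mem_compl_iff]
    tauto
  · exact Iff.rfl

/-! ### conjList -/

theorem mem_val_foldl_and {l : List (𝒳 × 𝒳)} : ∀ {acc : Fml R δ 𝒳} {v : 𝒳 → M},
    v ∈ val I (l.foldl (fun acc q => acc.and (.eql q.1 q.2)) acc) ↔
      v ∈ val I acc ∧ ∀ p ∈ l, v p.1 = v p.2 := by
  induction l with
  | nil => intro acc v; simp
  | cons p l ih =>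
    intro acc v
    rw [List.foldl_cons, ih]
    rw [val_and, Set.mem_inter_iff, val_eql]
    simp only [Set.mem_setOf_eq, List.mem_cons]
    constructor
    · rintro ⟨⟨h1, h2⟩, h3⟩
      refine ⟨h1, fun q hq => ?_⟩
      rcases hq with rfl | hq
      exacts [h2, h3 q hq]
    · rintro ⟨h1, h2⟩
      exact ⟨⟨h1, h2 p (Or.inl rfl)⟩, fun q hq => h2 q (Or.inr hq)⟩

theorem mem_val_conjList {l : List (𝒳 × 𝒳)} {v : 𝒳 → M} :
    v ∈ val I (conjList l : Fml R δ 𝒳) ↔ ∀ p ∈ l, v p.1 = v p.2 := by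
  cases l with
  | nil => simp [conjList, val_one]
  | cons p ps =>
    show v ∈ val I (ps.foldl _ (.eql p.1 p.2)) ↔ _
    rw [mem_val_foldl_and, val_eql]
    simp only [Set.mem_setOf_eq, List.mem_cons]
    constructor
    · rintro ⟨h1, h2⟩ q hq
      rcases hq with rfl | hq
      exacts [h1, h2 q hq]
    · intro h
      exact ⟨h p (Or.inl rfl), fun q hq => h q (Or.inr hq)⟩

theorem FV_foldl_and [DecidableEq 𝒳] [Fintype 𝒳] :
    ∀ (l : List (𝒳 × 𝒳)) (acc : Fml R δ 𝒳),
      FV acc ⊆ FV (l.foldl (fun acc q => acc.and (.eql q.1 q.2)) acc) ∧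
      ∀ p ∈ l, p.1 ∈ FV (l.foldl (fun acc q => acc.and (.eql q.1 q.2)) acc) ∧
        p.2 ∈ FV (l.foldl (fun acc q => acc.and (.eql q.1 q.2)) acc) := by
  intro l
  induction l with
  | nil => intro acc; exact ⟨fun a ha => ha, by simp⟩
  | cons p l ih =>
    intro acc
    rw [List.foldl_cons]
    obtain ⟨ih1, ih2⟩ := ih (acc.and (.eql p.1 p.2))
    have hsub : FV acc ⊆ FV (acc.and (.eql p.1 p.2)) := by
      intro a ha
      show a ∈ FV acc ∪ FV (.eql p.1 p.2 : Fml R δ 𝒳)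
      exact Finset.mem_union_left _ ha
    refine ⟨hsub.trans ih1, fun q hq => ?_⟩
    rcases List.mem_cons.1 hq with rfl | hq
    · constructor <;> apply ih1
      · show q.1 ∈ FV acc ∪ FV (.eql q.1 q.2 : Fml R δ 𝒳)
        apply Finset.mem_union_right
        simp [FV]
      · show q.2 ∈ FV acc ∪ FV (.eql q.1 q.2 : Fml R δ 𝒳)
        apply Finset.mem_union_right
        simp [FV]
    · exact ih2 q hq

theorem mem_FV_conjList [DecidableEq 𝒳] [Fintype 𝒳] {l : List (𝒳 × 𝒳)} {p : 𝒳 × 𝒳}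
    (hp : p ∈ l) :
    p.1 ∈ FV (conjList l : Fml R δ 𝒳) ∧ p.2 ∈ FV (conjList l : Fml R δ 𝒳) := by
  cases l with
  | nil => cases hp
  | cons q ps =>
    show p.1 ∈ FV (ps.foldl _ (.eql q.1 q.2)) ∧ p.2 ∈ FV (ps.foldl _ (.eql q.1 q.2))
    obtain ⟨h1, h2⟩ := FV_foldl_and (R := R) (δ := δ) ps (.eql q.1 q.2)
    rcases List.mem_cons.1 hp with rfl | hp
    · constructor <;> apply h1 <;> simp [FV]
    · exact h2 p hp

/-! ### subst and canonAtom -/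

theorem val_subst [DecidableEq 𝒳] {u b : 𝒳} (hub : u ≠ b) (χ : Fml R δ 𝒳) :
    val I (subst χ u b) = {v | Function.update v u (v b) ∈ val I χ} := by
  ext v
  constructor
  · rintro ⟨w, hw, hagree⟩
    have hwb : w b = v b := hagree b (Ne.symm hub)
    have hup : Function.update v u (v b) = w := by
      funext y
      by_cases hy : y = u
      · subst hy; rw [Function.update_self, ← hwb]; exact (hw.2).symm
      · rw [Function.update_of_ne hy]; exact (hagree y hy).symm
    show Function.update v u (v b) ∈ val I χ
    rw [hup]; exact hw.1
  · intro hv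
    refine ⟨Function.update v u (v b), ⟨hv, ?_⟩, ?_⟩
    · show Function.update v u (v b) u = Function.update v u (v b) b
      rw [Function.update_self, Function.update_of_ne (Ne.symm hub)]
    · intro y hy; exact Function.update_of_ne hy _ _

/-- Pointwise replacement of variable occurrences. -/
def repl1 [DecidableEq 𝒳] {n : ℕ} (w : Fin n → 𝒳) (p : 𝒳 × 𝒳) : Fin n → 𝒳 :=
  fun j => if w j = p.1 then p.2 else w j

theorem val_substFold [DecidableEq 𝒳] {r : R} :
    ∀ (l : List (𝒳 × 𝒳)), (∀ p ∈ l, p.1 ≠ p.2) → ∀ (χ : Fml R δ 𝒳) (w : Fin (δ r) → 𝒳),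
      val I χ = {v | (fun i => v (w i)) ∈ I r} →
      val I (substFold χ l) = {v | (fun i => v (l.foldl repl1 w i)) ∈ I r} := by
  intro l
  induction l with
  | nil => intro _ χ w h; exact h
  | cons p l ih =>
    intro hl χ w h
    show val I (substFold (subst χ p.1 p.2) l) = _
    rw [List.foldl_cons]
    apply ih (fun q hq => hl q (List.mem_cons_of_mem _ hq))
    rw [val_subst (hl p List.mem_cons_self) χ, h]
    ext v
    simp only [Set.mem_setOf_eq]
    have e : (fun i => Function.update v p.1 (v p.2) (w i)) = fun i => v (repl1 w p i) := by
      funext i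
      by_cases hi : w i = p.1 <;> simp [repl1, hi, Function.update_apply]
    rw [show ((fun i => Function.update v p.1 (v p.2) (w i)) ∈ I r) ↔
        ((fun i => v (repl1 w p i)) ∈ I r) from e ▸ Iff.rfl]

theorem foldl_repl1_map [DecidableEq 𝒳] {n : ℕ} {o ν : Fin n → 𝒳}
    (ho : Function.Injective o) (hν : ∀ i j, ν i ≠ o j) :
    ∀ (l : List (Fin n)) (S : Finset (Fin n)),
      (l.map fun i => (o i, ν i)).foldl repl1 (fun j => if j ∈ S then ν j else o j) =
        fun j => if j ∈ S ∪ l.toFinset then ν j else o j := by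
  intro l
  induction l with
  | nil => intro S; simp
  | cons i l ih =>
    intro S
    rw [List.map_cons, List.foldl_cons]
    have h1 : repl1 (fun j => if j ∈ S then ν j else o j) (o i, ν i) =
        fun j => if j ∈ insert i S then ν j else o j := by
      funext j
      simp only [repl1]
      by_cases hjS : j ∈ S
      · rw [if_pos hjS, if_neg (hν j i), if_pos (Finset.mem_insert_of_mem hjS)]
      · rw [if_neg hjS]
        by_cases hji : j = i
        · subst hji; rw [if_pos rfl, if_pos (Finset.mem_insert_self _ _)]
        · rw [if_neg (fun h => hji (ho h)), if_neg (by simp [hjS, hji])]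
    rw [h1, ih (insert i S)]
    have e : insert i S ∪ l.toFinset = S ∪ (i :: l).toFinset := by
      ext a; simp only [Finset.mem_union, Finset.mem_insert, List.toFinset_cons,
        List.mem_toFinset]; tauto
    rw [e]

theorem val_canonAtom [Fintype 𝒳] [LinearOrder 𝒳]
    {Y : ∀ r : R, Fin (δ r) → 𝒳} {Z : ∀ r : R, (Fin (δ r) → 𝒳) → Fin (δ r) → 𝒳}
    (hY : ∀ r, Function.Injective (Y r)) (hZ : GoodZ Y Z)
    (r : R) (x : Fin (δ r) → 𝒳) :
    val I (canonAtom Y Z r x) = val I (.rel r x : Fml R δ 𝒳) := by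
  obtain ⟨hZinj, hZY, hZx⟩ := hZ r x
  rw [canonAtom]
  have hpairs : ∀ p ∈ (List.ofFn fun i => (Y r i, Z r x i)) ++
      (List.ofFn fun i => (Z r x i, x i)), p.1 ≠ p.2 := by
    intro p hp
    rcases List.mem_append.1 hp with hp | hp
    · obtain ⟨i, hi⟩ := List.mem_ofFn.1 hp
      subst hi
      exact fun h => hZY i i h.symm
    · obtain ⟨i, hi⟩ := List.mem_ofFn.1 hp
      subst hi
      exact hZx i i
  have hfold1 : List.foldl repl1 (Y r) (List.ofFn fun i => (Y r i, Z r x i)) = Z r x := by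
    rw [List.ofFn_eq_map]
    have h := foldl_repl1_map (hY r) (fun i j => hZY i j) (List.finRange (δ r)) ∅
    rw [show (fun j => if j ∈ (∅ : Finset (Fin (δ r))) then Z r x j else Y r j) = Y r
      from by funext j; simp] at h
    rw [h]
    funext j; simp [List.toFinset_finRange]
  have hfold2 : List.foldl repl1 (Z r x) (List.ofFn fun i => (Z r x i, x i)) = x := by
    rw [List.ofFn_eq_map]
    have h := foldl_repl1_map hZinj (fun i j => fun hc => hZx j i hc.symm)
      (List.finRange (δ r)) ∅
    rw [show (fun j => if j ∈ (∅ : Finset (Fin (δ r))) then x j else Z r x j) = Z r x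
      from by funext j; simp] at h
    rw [h]
    funext j; simp [List.toFinset_finRange]
  rw [val_substFold _ hpairs (.rel r (Y r)) (Y r) rfl, List.foldl_append, hfold1, hfold2]
  rfl

theorem isNeg_substFold : ∀ (l : List (𝒳 × 𝒳)) (χ : Fml R δ 𝒳), isNeg χ = false →
    isNeg (substFold χ l) = false := by
  intro l
  induction l with
  | nil => intro χ h; exact h
  | cons p l ih => intro χ _; exact ih _ rfl

theorem isNeg_canonAtom [Fintype 𝒳] [LinearOrder 𝒳]
    {Y : ∀ r : R, Fin (δ r) → 𝒳} {Z : ∀ r : R, (Fin (δ r) → 𝒳) → Fin (δ r) → 𝒳}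
    (r : R) (x : Fin (δ r) → 𝒳) : isNeg (canonAtom Y Z r x) = false :=
  isNeg_substFold _ _ rfl

end Lemmas2
section Lemmas3

open Fml

variable {M : Type} {I : ∀ r : R, Set (Fin (δ r) → M)}

/-! ### unfolding lemmas -/

theorem eqR_one : eqR (.one : Fml R δ 𝒳) = idRel' := rfl
theorem eqR_rel (r : R) (x : Fin (δ r) → 𝒳) : eqR (.rel r x) = idRel' := rfl
theorem eqR_eql (x y : 𝒳) : eqR (.eql x y : Fml R δ 𝒳) = EqGen {(x, y)} := rfl
theorem eqR_not (φ : Fml R δ 𝒳) : eqR φ.not = coeqR φ := rfl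
theorem eqR_and (φ ψ : Fml R δ 𝒳) : eqR (φ.and ψ) = EqGen (eqR φ ∪ eqR ψ) := rfl
theorem eqR_or (φ ψ : Fml R δ 𝒳) : eqR (φ.or ψ) = eqR φ ∩ eqR ψ := rfl
theorem eqR_ex (x : 𝒳) (φ : Fml R δ 𝒳) : eqR (.ex x φ) = EqGen (eqR φ ∩ offDiag x) := rfl
theorem coeqR_one : coeqR (.one : Fml R δ 𝒳) = idRel' := rfl
theorem coeqR_rel (r : R) (x : Fin (δ r) → 𝒳) : coeqR (.rel r x) = idRel' := rfl
theorem coeqR_eql (x y : 𝒳) : coeqR (.eql x y : Fml R δ 𝒳) = idRel' := rfl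
theorem coeqR_not (φ : Fml R δ 𝒳) : coeqR φ.not = eqR φ := rfl
theorem coeqR_and (φ ψ : Fml R δ 𝒳) : coeqR (φ.and ψ) = coeqR φ ∩ coeqR ψ := rfl
theorem coeqR_or (φ ψ : Fml R δ 𝒳) : coeqR (φ.or ψ) = EqGen (coeqR φ ∪ coeqR ψ) := rfl
theorem coeqR_ex (x : 𝒳) (φ : Fml R δ 𝒳) :
    coeqR (.ex x φ) = EqGen (coeqR φ ∩ offDiag x) := rfl

theorem Pos_one : Positive (.one : Fml R δ 𝒳) ↔ True := Iff.rfl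
theorem Pos_rel (r : R) (x : Fin (δ r) → 𝒳) : Positive (.rel r x) ↔ True := Iff.rfl
theorem Pos_eql (x y : 𝒳) : Positive (.eql x y : Fml R δ 𝒳) ↔ True := Iff.rfl
theorem Pos_not (φ : Fml R δ 𝒳) : Positive φ.not ↔ ¬ Positive φ := Iff.rfl
theorem Pos_and (φ ψ : Fml R δ 𝒳) : Positive (φ.and ψ) ↔ Positive φ ∨ Positive ψ := Iff.rfl
theorem Pos_or (φ ψ : Fml R δ 𝒳) : Positive (φ.or ψ) ↔ Positive φ ∧ Positive ψ := Iff.rfl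
theorem Pos_ex (x : 𝒳) (φ : Fml R δ 𝒳) : Positive (.ex x φ) ↔ Positive φ := Iff.rfl

theorem gen0_and (φ ψ : Fml R δ 𝒳) :
    gen0 (φ.and ψ) = clE (eqR (φ.and ψ)) (gen0 φ ∪ gen0 ψ) := rfl
theorem gen0_or (φ ψ : Fml R δ 𝒳) : gen0 (φ.or ψ) = gen0 φ ∩ gen0 ψ := rfl
theorem gen0_not (φ : Fml R δ 𝒳) : gen0 φ.not = cogen0 φ := rfl
theorem gen0_ex (x : 𝒳) (φ : Fml R δ 𝒳) : gen0 (.ex x φ) = gen0 φ \ {x} := rfl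
theorem cogen0_not (φ : Fml R δ 𝒳) : cogen0 φ.not = gen0 φ := rfl
theorem cogen0_and (φ ψ : Fml R δ 𝒳) : cogen0 (φ.and ψ) = cogen0 φ ∩ cogen0 ψ := rfl
theorem cogen0_or (φ ψ : Fml R δ 𝒳) :
    cogen0 (φ.or ψ) = clE (EqGen (coeqR φ ∪ coeqR ψ)) (cogen0 φ ∪ cogen0 ψ) := rfl
theorem cogen0_ex (x : 𝒳) (φ : Fml R δ 𝒳) : cogen0 (.ex x φ) = cogen0 φ \ {x} := rfl

theorem clE_empty (E : Set (𝒳 × 𝒳)) : clE E ∅ = ∅ := by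
  ext y; simp [clE]

/-! ### equivalence properties of eq/coeq -/

theorem refl_sub_of_equiv {E : Set (𝒳 × 𝒳)}
    (h : Equivalence fun a b : 𝒳 => (a, b) ∈ E) : idRel' ⊆ E := by
  rintro ⟨a, b⟩ hab
  have : a = b := hab
  subst this
  exact h.refl a

theorem inter_equiv {E F : Set (𝒳 × 𝒳)} (hE : Equivalence fun a b : 𝒳 => (a, b) ∈ E)
    (hF : Equivalence fun a b : 𝒳 => (a, b) ∈ F) :
    Equivalence fun a b : 𝒳 => (a, b) ∈ E ∩ F := by
  constructor
  · intro a; exact ⟨hE.refl a, hF.refl a⟩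
  · intro a b h; exact ⟨hE.symm h.1, hF.symm h.2⟩
  · intro a b c h1 h2; exact ⟨hE.trans h1.1 h2.1, hF.trans h1.2 h2.2⟩

theorem eqco_equiv (φ : Fml R δ 𝒳) :
    Equivalence (fun a b : 𝒳 => (a, b) ∈ eqR φ) ∧
    Equivalence (fun a b : 𝒳 => (a, b) ∈ coeqR φ) := by
  induction φ with
  | one => exact ⟨idRel'_equivalence, idRel'_equivalence⟩
  | rel r x => exact ⟨idRel'_equivalence, idRel'_equivalence⟩
  | eql x y => exact ⟨EqGen_equivalence _, idRel'_equivalence⟩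
  | not φ ih => exact ⟨ih.2, ih.1⟩
  | and φ ψ ih1 ih2 => exact ⟨EqGen_equivalence _, inter_equiv ih1.2 ih2.2⟩
  | or φ ψ ih1 ih2 => exact ⟨inter_equiv ih1.1 ih2.1, EqGen_equivalence _⟩
  | ex x φ ih => exact ⟨EqGen_equivalence _, EqGen_equivalence _⟩

theorem refl_sub_eqR (φ : Fml R δ 𝒳) : idRel' ⊆ eqR φ :=
  refl_sub_of_equiv (eqco_equiv φ).1

theorem refl_sub_coeqR (φ : Fml R δ 𝒳) : idRel' ⊆ coeqR φ :=
  refl_sub_of_equiv (eqco_equiv φ).2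

theorem EqGen_eqR (φ : Fml R δ 𝒳) : EqGen (eqR φ) = eqR φ :=
  EqGen_of_equiv (eqco_equiv φ).1

/-! ### triviality of eq/coeq according to positivity -/

theorem pos_eqco_triv (φ : Fml R δ 𝒳) :
    (Positive φ → coeqR φ = idRel') ∧ (¬Positive φ → eqR φ = idRel') := by
  induction φ with
  | one => exact ⟨fun _ => rfl, fun h => absurd trivial h⟩
  | rel r x => exact ⟨fun _ => rfl, fun h => absurd trivial h⟩
  | eql x y => exact ⟨fun _ => rfl, fun h => absurd trivial h⟩
  | not φ ih =>
    exact ⟨fun h => ih.2 ((Pos_not φ).1 h), fun h => ih.1 (not_not.1 ((Pos_not φ).not.1 h))⟩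
  | and φ ψ ih1 ih2 =>
    constructor
    · intro h
      rw [coeqR_and]
      apply le_antisymm
      · rcases (Pos_and φ ψ).1 h with h | h
        · rw [ih1.1 h]; exact Set.inter_subset_left
        · rw [ih2.1 h]; exact Set.inter_subset_right
      · intro p hp; exact ⟨refl_sub_coeqR φ hp, refl_sub_coeqR ψ hp⟩
    · intro h
      rw [not_iff_not.2 (Pos_and φ ψ), not_or] at h
      rw [eqR_and, ih1.2 h.1, ih2.2 h.2]
      exact EqGen_le_id (by simp)
  | or φ ψ ih1 ih2 =>
    constructor
    · intro h
      obtain ⟨h1, h2⟩ := (Pos_or φ ψ).1 h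
      rw [coeqR_or, ih1.1 h1, ih2.1 h2]
      exact EqGen_le_id (by simp)
    · intro h
      rw [not_iff_not.2 (Pos_or φ ψ), not_and_or] at h
      rw [eqR_or]
      apply le_antisymm
      · rcases h with h | h
        · rw [ih1.2 h]; exact Set.inter_subset_left
        · rw [ih2.2 h]; exact Set.inter_subset_right
      · intro p hp; exact ⟨refl_sub_eqR φ hp, refl_sub_eqR ψ hp⟩
  | ex x φ ih =>
    constructor
    · intro h
      rw [coeqR_ex, ih.1 ((Pos_ex x φ).1 h)]
      exact EqGen_le_id Set.inter_subset_left
    · intro h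
      rw [eqR_ex, ih.2 (fun hp => h ((Pos_ex x φ).2 hp))]
      exact EqGen_le_id Set.inter_subset_left

theorem pos_genco0 (φ : Fml R δ 𝒳) :
    (Positive φ → cogen0 φ = ∅) ∧ (¬Positive φ → gen0 φ = ∅) := by
  induction φ with
  | one => exact ⟨fun _ => rfl, fun h => absurd trivial h⟩
  | rel r x => exact ⟨fun _ => rfl, fun h => absurd trivial h⟩
  | eql x y => exact ⟨fun _ => rfl, fun h => absurd trivial h⟩
  | not φ ih =>
    exact ⟨fun h => ih.2 ((Pos_not φ).1 h), fun h => ih.1 (not_not.1 ((Pos_not φ).not.1 h))⟩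
  | and φ ψ ih1 ih2 =>
    constructor
    · intro h
      rw [cogen0_and]
      rcases (Pos_and φ ψ).1 h with h | h
      · rw [ih1.1 h, Set.empty_inter]
      · rw [ih2.1 h, Set.inter_empty]
    · intro h
      rw [not_iff_not.2 (Pos_and φ ψ), not_or] at h
      rw [gen0_and, ih1.2 h.1, ih2.2 h.2, Set.empty_union, clE_empty]
  | or φ ψ ih1 ih2 =>
    constructor
    · intro h
      obtain ⟨h1, h2⟩ := (Pos_or φ ψ).1 h
      rw [cogen0_or, ih1.1 h1, ih2.1 h2, Set.empty_union, clE_empty]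
    · intro h
      rw [not_iff_not.2 (Pos_or φ ψ), not_and_or] at h
      rw [gen0_or]
      rcases h with h | h
      · rw [ih1.2 h, Set.empty_inter]
      · rw [ih2.2 h, Set.inter_empty]
  | ex x φ ih =>
    constructor
    · intro h
      rw [cogen0_ex, ih.1 ((Pos_ex x φ).1 h), Set.empty_diff]
    · intro h
      rw [gen0_ex, ih.2 (fun hp => h ((Pos_ex x φ).2 hp)), Set.empty_diff]

theorem pos_of_mem_gen0 {φ : Fml R δ 𝒳} {x : 𝒳} (h : x ∈ gen0 φ) : Positive φ := by
  by_contra hp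
  rw [(pos_genco0 φ).2 hp] at h
  exact h

/-! ### nontrivial pairs of eq/coeq lie in FV -/

theorem eqco_nt [DecidableEq 𝒳] [Fintype 𝒳] (φ : Fml R δ 𝒳) :
    (∀ p ∈ eqR φ, p.1 ≠ p.2 → p.1 ∈ (↑(FV φ) : Set 𝒳) ∧ p.2 ∈ (↑(FV φ) : Set 𝒳)) ∧
    (∀ p ∈ coeqR φ, p.1 ≠ p.2 → p.1 ∈ (↑(FV φ) : Set 𝒳) ∧ p.2 ∈ (↑(FV φ) : Set 𝒳)) := by
  induction φ with
  | one =>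
    exact ⟨fun p hp hne => absurd (hp : p.1 = p.2) hne,
           fun p hp hne => absurd (hp : p.1 = p.2) hne⟩
  | rel r x =>
    exact ⟨fun p hp hne => absurd (hp : p.1 = p.2) hne,
           fun p hp hne => absurd (hp : p.1 = p.2) hne⟩
  | eql x y =>
    constructor
    · apply EqGen_nt
      rintro p hp hne
      rw [Set.mem_singleton_iff] at hp
      subst hp
      constructor <;> simp [FV]
    · exact fun p hp hne => absurd (hp : p.1 = p.2) hne
  | not φ ih => exact ⟨ih.2, ih.1⟩
  | and φ ψ ih1 ih2 =>
    have hFV : (↑(FV (φ.and ψ)) : Set 𝒳) = ↑(FV φ) ∪ ↑(FV ψ) := by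
      show (↑(FV φ ∪ FV ψ) : Set 𝒳) = _
      exact Finset.coe_union _ _
    constructor
    · rw [eqR_and, hFV]
      apply EqGen_nt
      rintro p hp hne
      rcases hp with hp | hp
      · obtain ⟨h1, h2⟩ := ih1.1 p hp hne
        exact ⟨Or.inl h1, Or.inl h2⟩
      · obtain ⟨h1, h2⟩ := ih2.1 p hp hne
        exact ⟨Or.inr h1, Or.inr h2⟩
    · intro p hp hne
      obtain ⟨h1, h2⟩ := ih1.2 p hp.1 hne
      rw [hFV]
      exact ⟨Or.inl h1, Or.inl h2⟩
  | or φ ψ ih1 ih2 =>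
    have hFV : (↑(FV (φ.or ψ)) : Set 𝒳) = ↑(FV φ) ∪ ↑(FV ψ) := by
      show (↑(FV φ ∪ FV ψ) : Set 𝒳) = _
      exact Finset.coe_union _ _
    constructor
    · intro p hp hne
      obtain ⟨h1, h2⟩ := ih1.1 p hp.1 hne
      rw [hFV]
      exact ⟨Or.inl h1, Or.inl h2⟩
    · rw [coeqR_or, hFV]
      apply EqGen_nt
      rintro p hp hne
      rcases hp with hp | hp
      · obtain ⟨h1, h2⟩ := ih1.2 p hp hne
        exact ⟨Or.inl h1, Or.inl h2⟩
      · obtain ⟨h1, h2⟩ := ih2.2 p hp hne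
        exact ⟨Or.inr h1, Or.inr h2⟩
  | ex x φ ih =>
    have hFV : (↑(FV (Fml.ex x φ)) : Set 𝒳) = ↑(FV φ) \ {x} := by
      show (↑(FV φ \ {x}) : Set 𝒳) = _
      simp
    constructor
    · rw [eqR_ex, hFV]
      apply EqGen_nt
      rintro p ⟨hp, hp1, hp2⟩ hne
      obtain ⟨h1, h2⟩ := ih.1 p hp hne
      exact ⟨⟨h1, hp1⟩, ⟨h2, hp2⟩⟩
    · rw [coeqR_ex, hFV]
      apply EqGen_nt
      rintro p ⟨hp, hp1, hp2⟩ hne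
      obtain ⟨h1, h2⟩ := ih.2 p hp hne
      exact ⟨⟨h1, hp1⟩, ⟨h2, hp2⟩⟩

/-! ### semantic soundness of eq/coeq -/

theorem val_eqco_sound (φ : Fml R δ 𝒳) :
    (∀ p ∈ eqR φ, val I φ ⊆ diag p.1 p.2) ∧
    (∀ p ∈ coeqR φ, (val I φ)ᶜ ⊆ diag p.1 p.2) := by
  induction φ with
  | one =>
    exact ⟨fun p hp v _ => congrArg v (hp : p.1 = p.2),
           fun p hp v _ => congrArg v (hp : p.1 = p.2)⟩
  | rel r x =>
    exact ⟨fun p hp v _ => congrArg v (hp : p.1 = p.2),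
           fun p hp v _ => congrArg v (hp : p.1 = p.2)⟩
  | eql x y =>
    constructor
    · apply EqGen_diag
      rintro p hp
      rw [Set.mem_singleton_iff] at hp
      subst hp
      exact fun v hv => hv
    · exact fun p hp v _ => congrArg v (hp : p.1 = p.2)
  | not φ ih =>
    constructor
    · exact fun p hp => ih.2 p hp
    · intro p hp
      rw [val_not, compl_compl]
      exact ih.1 p hp
  | and φ ψ ih1 ih2 =>
    constructor
    · apply EqGen_diag
      rintro p hp
      rcases hp with hp | hp
      · exact fun v hv => ih1.1 p hp hv.1
      · exact fun v hv => ih2.1 p hp hv.2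
    · intro p hp v hv
      by_cases h1 : v ∈ val I φ
      · have h2 : v ∉ val I ψ := fun h2 => hv ⟨h1, h2⟩
        exact ih2.2 p hp.2 h2
      · exact ih1.2 p hp.1 h1
  | or φ ψ ih1 ih2 =>
    constructor
    · intro p hp v hv
      rcases hv with hv | hv
      · exact ih1.1 p hp.1 hv
      · exact ih2.1 p hp.2 hv
    · apply EqGen_diag
      rintro p hp
      rcases hp with hp | hp
      · exact fun v hv => ih1.2 p hp (fun h => hv (Or.inl h))
      · exact fun v hv => ih2.2 p hp (fun h => hv (Or.inr h))
  | ex x φ ih =>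
    constructor
    · apply EqGen_diag
      rintro p ⟨hp, hp1, hp2⟩ v hv
      obtain ⟨u, hu, hagree⟩ := hv
      have := ih.1 p hp hu
      show v p.1 = v p.2
      rw [← hagree p.1 hp1, ← hagree p.2 hp2]
      exact this
    · apply EqGen_diag
      rintro p ⟨hp, hp1, hp2⟩ v hv
      have hvφ : v ∉ val I φ := fun h => hv ⟨v, h, fun _ _ => rfl⟩
      exact ih.2 p hp hvφ

/-! ### gen0/cogen0 lie in FV -/

theorem genco0_sub_FV [DecidableEq 𝒳] [Fintype 𝒳] (φ : Fml R δ 𝒳) :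
    gen0 φ ⊆ (↑(FV φ) : Set 𝒳) ∧ cogen0 φ ⊆ (↑(FV φ) : Set 𝒳) := by
  induction φ with
  | one => exact ⟨Set.empty_subset _, Set.empty_subset _⟩
  | rel r x =>
    constructor
    · rintro a ⟨i, rfl⟩
      simp [FV]
    · exact Set.empty_subset _
  | eql x y => exact ⟨Set.empty_subset _, Set.empty_subset _⟩
  | not φ ih => exact ⟨ih.2, ih.1⟩
  | and φ ψ ih1 ih2 =>
    have hFV : (↑(FV (φ.and ψ)) : Set 𝒳) = ↑(FV φ) ∪ ↑(FV ψ) := by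
      show (↑(FV φ ∪ FV ψ) : Set 𝒳) = _
      exact Finset.coe_union _ _
    constructor
    · rintro y ⟨z, hz, hzy⟩
      by_cases hne : z = y
      · subst hne
        rw [hFV]
        rcases hz with hz | hz
        exacts [Or.inl (ih1.1 hz), Or.inr (ih2.1 hz)]
      · exact ((eqco_nt (φ.and ψ)).1 (z, y) hzy hne).2
    · intro y hy
      rw [hFV]
      exact Or.inl (ih1.2 hy.1)
  | or φ ψ ih1 ih2 =>
    have hFV : (↑(FV (φ.or ψ)) : Set 𝒳) = ↑(FV φ) ∪ ↑(FV ψ) := by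
      show (↑(FV φ ∪ FV ψ) : Set 𝒳) = _
      exact Finset.coe_union _ _
    constructor
    · intro y hy
      rw [hFV]
      exact Or.inl (ih1.1 hy.1)
    · rintro y ⟨z, hz, hzy⟩
      by_cases hne : z = y
      · subst hne
        rw [hFV]
        rcases hz with hz | hz
        exacts [Or.inl (ih1.2 hz), Or.inr (ih2.2 hz)]
      · have hnt : ∀ p ∈ coeqR φ ∪ coeqR ψ, p.1 ≠ p.2 →
            p.1 ∈ (↑(FV (φ.or ψ)) : Set 𝒳) ∧ p.2 ∈ (↑(FV (φ.or ψ)) : Set 𝒳) := by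
          rintro p hp hpne
          rw [hFV]
          rcases hp with hp | hp
          · obtain ⟨h1, h2⟩ := (eqco_nt φ).2 p hp hpne
            exact ⟨Or.inl h1, Or.inl h2⟩
          · obtain ⟨h1, h2⟩ := (eqco_nt ψ).2 p hp hpne
            exact ⟨Or.inr h1, Or.inr h2⟩
        exact (EqGen_nt hnt (z, y) hzy hne).2
  | ex x φ ih =>
    have hFV : (↑(FV (Fml.ex x φ)) : Set 𝒳) = ↑(FV φ) \ {x} := by
      show (↑(FV φ \ {x}) : Set 𝒳) = _
      simp
    constructor
    · rintro y ⟨hy, hyx⟩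
      rw [hFV]
      exact ⟨ih.1 hy, hyx⟩
    · rintro y ⟨hy, hyx⟩
      rw [hFV]
      exact ⟨ih.2 hy, hyx⟩

end Lemmas3
section Lemmas4

open Fml

variable {M : Type} {I : ∀ r : R, Set (Fin (δ r) → M)}
variable [Fintype 𝒳] [LinearOrder 𝒳]
variable {rep : Set (𝒳 × 𝒳) → List (𝒳 × 𝒳)}

/-! ### gen/cogen unfolding -/

theorem gen_one : gen rep (.one : Fml R δ 𝒳) = .one := rfl
theorem gen_rel (r : R) (x : Fin (δ r) → 𝒳) : gen rep (.rel r x) = .rel r x := rfl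
theorem gen_eql (x y : 𝒳) : gen rep (.eql x y : Fml R δ 𝒳) = .one := rfl
theorem gen_not (φ : Fml R δ 𝒳) : gen rep φ.not = cogen rep φ := rfl
theorem gen_and (φ ψ : Fml R δ 𝒳) :
    gen rep (φ.and ψ) = .and (.and (gen rep φ) (gen rep ψ))
      (conjList (rep (EqGen (eqR (φ.and ψ) \ eqR ((gen rep φ).and (gen rep ψ)))))) := rfl
theorem gen_or (φ ψ : Fml R δ 𝒳) :
    gen rep (φ.or ψ) = orStar (gen rep φ) (gen rep ψ) := rfl
theorem gen_ex (x : 𝒳) (φ : Fml R δ 𝒳) : gen rep (.ex x φ) = .ex x (gen rep φ) := rfl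
theorem cogen_one : cogen rep (.one : Fml R δ 𝒳) = .one := rfl
theorem cogen_rel (r : R) (x : Fin (δ r) → 𝒳) : cogen rep (.rel r x) = .one := rfl
theorem cogen_eql (x y : 𝒳) : cogen rep (.eql x y : Fml R δ 𝒳) = .one := rfl
theorem cogen_not (φ : Fml R δ 𝒳) : cogen rep φ.not = gen rep φ := rfl
theorem cogen_and (φ ψ : Fml R δ 𝒳) :
    cogen rep (φ.and ψ) = orStar (cogen rep φ) (cogen rep ψ) := rfl
theorem cogen_or (φ ψ : Fml R δ 𝒳) :
    cogen rep (φ.or ψ) = .and (.and (cogen rep φ) (cogen rep ψ))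
      (conjList (rep (EqGen (eqR ((Fml.not φ).and (Fml.not ψ)) \
        eqR ((cogen rep φ).and (cogen rep ψ)))))) := rfl
theorem cogen_ex (x : 𝒳) (φ : Fml R δ 𝒳) : cogen rep (.ex x φ) = .ex x (cogen rep φ) := rfl

theorem FV_orStar (φ ψ : Fml R δ 𝒳) : FV (orStar φ ψ) = FV φ ∩ FV ψ := by
  show FV (exAll (FV φ \ FV ψ) φ) ∪ FV (exAll (FV ψ \ FV φ) ψ) = _
  rw [FV_exAll, FV_exAll]
  ext a
  simp only [Finset.mem_union, Finset.mem_sdiff, Finset.mem_inter]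
  tauto

/-! ### rep facts -/

theorem pairsOf_rep_sub (hrep : MinRep rep) (D : Set (𝒳 × 𝒳)) :
    pairsOf (rep (EqGen D)) ⊆ EqGen D := by
  have h := (hrep (EqGen D) (EqGen_equivalence D)).1
  exact fun p hp => h ▸ EqGen_sub_base hp

theorem rep_EqGen_empty (hrep : MinRep rep) :
    rep (EqGen (∅ : Set (𝒳 × 𝒳))) = [] := by
  have h := hrep (EqGen (∅ : Set (𝒳 × 𝒳))) (EqGen_equivalence _)
  have h2 := h.2 ∅ (Set.empty_subset _) rfl
  cases hl : rep (EqGen (∅ : Set (𝒳 × 𝒳))) with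
  | nil => rfl
  | cons p l =>
    exfalso
    have hp : p ∈ pairsOf (rep (EqGen (∅ : Set (𝒳 × 𝒳)))) := by
      show p ∈ rep (EqGen (∅ : Set (𝒳 × 𝒳)))
      rw [hl]
      exact List.mem_cons_self
    rw [← h2] at hp
    exact hp

theorem conjList_rep_empty (hrep : MinRep rep) {D : Set (𝒳 × 𝒳)} (hD : D = ∅) :
    conjList (rep (EqGen D)) = (.one : Fml R δ 𝒳) := by
  subst hD
  rw [rep_EqGen_empty hrep]
  rfl

theorem EqGen_diff_sub (φ : Fml R δ 𝒳) (B : Set (𝒳 × 𝒳)) :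
    EqGen (eqR φ \ B) ⊆ eqR φ := by
  conv_rhs => rw [← EqGen_eqR φ]
  exact EqGen_le_EqGen (fun p hp => EqGen_sub_base hp.1)

/-! ### gen0 ⊆ FV (gen) -/

theorem genco0_sub_FV_gen (hrep : MinRep rep) (φ : Fml R δ 𝒳) :
    gen0 φ ⊆ (↑(FV (gen rep φ)) : Set 𝒳) ∧
    cogen0 φ ⊆ (↑(FV (cogen rep φ)) : Set 𝒳) := by
  induction φ with
  | one => exact ⟨Set.empty_subset _, Set.empty_subset _⟩
  | rel r x =>
    constructor
    · rintro a ⟨i, rfl⟩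
      simp [gen_rel, FV]
    · exact Set.empty_subset _
  | eql x y => exact ⟨Set.empty_subset _, Set.empty_subset _⟩
  | not φ ih => exact ⟨ih.2, ih.1⟩
  | and φ ψ ih1 ih2 =>
    constructor
    · rintro y ⟨z, hz, hzy⟩
      rw [gen_and]
      set g1 := gen rep φ with hg1
      set g2 := gen rep ψ with hg2
      set D := eqR (φ.and ψ) \ eqR (g1.and g2) with hD
      set cl := conjList (rep (EqGen D)) with hcl
      have hFV : FV ((g1.and g2).and cl) = (FV g1 ∪ FV g2) ∪ FV cl := rfl
      by_cases hne : z = y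
      · subst hne
        show z ∈ FV ((g1.and g2).and cl)
        rw [hFV]
        rcases hz with hz | hz
        · exact Finset.mem_union_left _ (Finset.mem_union_left _ (ih1.1 hz))
        · exact Finset.mem_union_left _ (Finset.mem_union_right _ (ih2.1 hz))
      · have hsub : eqR (φ.and ψ) ⊆
            EqGen (pairsOf (rep (EqGen D)) ∪ eqR (g1.and g2)) := by
          have h1 : eqR (φ.and ψ) ⊆ EqGen (D ∪ eqR (g1.and g2)) := by
            rw [eqR_and]
            apply EqGen_le_EqGen
            intro p hp
            by_cases hmem : p ∈ eqR (g1.and g2)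
            · exact mem_EqGen_base (Or.inr hmem)
            · refine mem_EqGen_base (Or.inl ⟨?_, hmem⟩)
              rw [eqR_and]
              exact EqGen_sub_base hp
          refine h1.trans (EqGen_le_EqGen ?_)
          rintro p (hp | hp)
          · have : p ∈ EqGen (pairsOf (rep (EqGen D))) := by
              rw [(hrep (EqGen D) (EqGen_equivalence D)).1]
              exact EqGen_sub_base hp
            exact EqGen_mono Set.subset_union_left this
          · exact mem_EqGen_base (Or.inr hp)
        have hnt : ∀ p ∈ pairsOf (rep (EqGen D)) ∪ eqR (g1.and g2), p.1 ≠ p.2 →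
            p.1 ∈ (↑(FV ((g1.and g2).and cl)) : Set 𝒳) ∧
            p.2 ∈ (↑(FV ((g1.and g2).and cl)) : Set 𝒳) := by
          rintro p (hp | hp) hpne
          · obtain ⟨h1, h2⟩ := mem_FV_conjList (l := rep (EqGen D)) hp
            rw [hFV]
            exact ⟨Finset.mem_coe.2 (Finset.mem_union_right _ h1),
                   Finset.mem_coe.2 (Finset.mem_union_right _ h2)⟩
          · obtain ⟨h1, h2⟩ := (eqco_nt (g1.and g2)).1 p hp hpne
            rw [hFV]
            have e : (↑(FV (g1.and g2)) : Set 𝒳) = ↑(FV g1 ∪ FV g2) := rfl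
            rw [e] at h1 h2
            exact ⟨Finset.mem_coe.2 (Finset.mem_union_left _ (Finset.mem_coe.1 h1)),
                   Finset.mem_coe.2 (Finset.mem_union_left _ (Finset.mem_coe.1 h2))⟩
        exact (EqGen_nt hnt (z, y) (hsub hzy) hne).2
    · intro y hy
      rw [cogen_and, FV_orStar]
      exact Finset.mem_coe.2 (Finset.mem_inter.2 ⟨ih1.2 hy.1, ih2.2 hy.2⟩)
  | or φ ψ ih1 ih2 =>
    constructor
    · intro y hy
      rw [gen_or, FV_orStar]
      exact Finset.mem_coe.2 (Finset.mem_inter.2 ⟨ih1.1 hy.1, ih2.1 hy.2⟩)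
    · rintro y ⟨z, hz, hzy⟩
      rw [cogen_or]
      set c1 := cogen rep φ with hc1
      set c2 := cogen rep ψ with hc2
      set N := (Fml.not φ).and (Fml.not ψ) with hN
      set D := eqR N \ eqR (c1.and c2) with hD
      set cl := conjList (rep (EqGen D)) with hcl
      have hFV : FV ((c1.and c2).and cl) = (FV c1 ∪ FV c2) ∪ FV cl := rfl
      have hEq : EqGen (coeqR φ ∪ coeqR ψ) = eqR N := rfl
      rw [hEq] at hzy
      by_cases hne : z = y
      · subst hne
        show z ∈ FV ((c1.and c2).and cl)
        rw [hFV]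
        rcases hz with hz | hz
        · exact Finset.mem_union_left _ (Finset.mem_union_left _ (ih1.2 hz))
        · exact Finset.mem_union_left _ (Finset.mem_union_right _ (ih2.2 hz))
      · have hsub : eqR N ⊆ EqGen (pairsOf (rep (EqGen D)) ∪ eqR (c1.and c2)) := by
          have h1 : eqR N ⊆ EqGen (D ∪ eqR (c1.and c2)) := by
            rw [hN, eqR_and]
            apply EqGen_le_EqGen
            intro p hp
            by_cases hmem : p ∈ eqR (c1.and c2)
            · exact mem_EqGen_base (Or.inr hmem)
            · refine mem_EqGen_base (Or.inl ⟨?_, hmem⟩)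
              rw [hN, eqR_and]
              exact EqGen_sub_base hp
          refine h1.trans (EqGen_le_EqGen ?_)
          rintro p (hp | hp)
          · have : p ∈ EqGen (pairsOf (rep (EqGen D))) := by
              rw [(hrep (EqGen D) (EqGen_equivalence D)).1]
              exact EqGen_sub_base hp
            exact EqGen_mono Set.subset_union_left this
          · exact mem_EqGen_base (Or.inr hp)
        have hnt : ∀ p ∈ pairsOf (rep (EqGen D)) ∪ eqR (c1.and c2), p.1 ≠ p.2 →
            p.1 ∈ (↑(FV ((c1.and c2).and cl)) : Set 𝒳) ∧
            p.2 ∈ (↑(FV ((c1.and c2).and cl)) : Set 𝒳) := by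
          rintro p (hp | hp) hpne
          · obtain ⟨h1, h2⟩ := mem_FV_conjList (l := rep (EqGen D)) hp
            rw [hFV]
            exact ⟨Finset.mem_coe.2 (Finset.mem_union_right _ h1),
                   Finset.mem_coe.2 (Finset.mem_union_right _ h2)⟩
          · obtain ⟨h1, h2⟩ := (eqco_nt (c1.and c2)).1 p hp hpne
            rw [hFV]
            have e : (↑(FV (c1.and c2)) : Set 𝒳) = ↑(FV c1 ∪ FV c2) := rfl
            rw [e] at h1 h2
            exact ⟨Finset.mem_coe.2 (Finset.mem_union_left _ (Finset.mem_coe.1 h1)),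
                   Finset.mem_coe.2 (Finset.mem_union_left _ (Finset.mem_coe.1 h2))⟩
        exact (EqGen_nt hnt (z, y) (hsub hzy) hne).2
  | ex x φ ih =>
    constructor
    · rintro y ⟨hy, hyx⟩
      rw [gen_ex]
      have : y ∈ FV (gen rep φ) := ih.1 hy
      show y ∈ FV (gen rep φ) \ {x}
      simp_all
    · rintro y ⟨hy, hyx⟩
      rw [cogen_ex]
      have : y ∈ FV (cogen rep φ) := ih.2 hy
      show y ∈ FV (cogen rep φ) \ {x}
      simp_all

/-! ### soundness of gen/cogen -/

theorem gen_sound (hrep : MinRep rep) (φ : Fml R δ 𝒳) :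
    val I φ ⊆ val I (gen rep φ) ∧ (val I φ)ᶜ ⊆ val I (cogen rep φ) := by
  induction φ with
  | one => exact ⟨le_rfl, fun v _ => trivial⟩
  | rel r x => exact ⟨le_rfl, fun v _ => trivial⟩
  | eql x y => exact ⟨fun v _ => trivial, fun v _ => trivial⟩
  | not φ ih =>
    constructor
    · exact ih.2
    · rw [val_not, compl_compl]
      exact ih.1
  | and φ ψ ih1 ih2 =>
    constructor
    · intro v hv
      refine ⟨⟨ih1.1 hv.1, ih2.1 hv.2⟩, mem_val_conjList.2 ?_⟩
      intro p hp
      have hp' : p ∈ eqR (φ.and ψ) :=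
        EqGen_diff_sub (φ.and ψ) _ (pairsOf_rep_sub hrep _ hp)
      exact (val_eqco_sound (φ.and ψ)).1 p hp' hv
    · intro v hv
      by_cases h1 : v ∈ val I φ
      · have h2 : v ∉ val I ψ := fun h => hv ⟨h1, h⟩
        exact Or.inr (val_le_exAll _ _ (ih2.2 h2))
      · exact Or.inl (val_le_exAll _ _ (ih1.2 h1))
  | or φ ψ ih1 ih2 =>
    constructor
    · rintro v (hv | hv)
      · exact Or.inl (val_le_exAll _ _ (ih1.1 hv))
      · exact Or.inr (val_le_exAll _ _ (ih2.1 hv))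
    · intro v hv
      have h1 : v ∉ val I φ := fun h => hv (Or.inl h)
      have h2 : v ∉ val I ψ := fun h => hv (Or.inr h)
      refine ⟨⟨ih1.2 h1, ih2.2 h2⟩, mem_val_conjList.2 ?_⟩
      intro p hp
      have hp' : p ∈ eqR ((Fml.not φ).and (Fml.not ψ)) :=
        EqGen_diff_sub ((Fml.not φ).and (Fml.not ψ)) _ (pairsOf_rep_sub hrep _ hp)
      exact (val_eqco_sound ((Fml.not φ).and (Fml.not ψ))).1 p hp' ⟨h1, h2⟩
  | ex x φ ih =>
    constructor
    · rintro v ⟨u, hu, ha⟩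
      exact ⟨u, ih.1 hu, ha⟩
    · intro v hv
      exact ⟨v, ih.2 (fun h => hv ⟨v, h, fun _ _ => rfl⟩), fun _ _ => rfl⟩

/-! ### triviality of gen/cogen according to positivity -/

theorem pos_genco_univ (hrep : MinRep rep) (φ : Fml R δ 𝒳) :
    (Positive φ → val I (cogen rep φ) = Set.univ) ∧
    (¬Positive φ → val I (gen rep φ) = Set.univ) := by
  induction φ with
  | one => exact ⟨fun _ => rfl, fun h => absurd trivial h⟩
  | rel r x => exact ⟨fun _ => rfl, fun h => absurd trivial h⟩
  | eql x y => exact ⟨fun _ => rfl, fun h => absurd trivial h⟩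
  | not φ ih =>
    exact ⟨fun h => ih.2 ((Pos_not φ).1 h), fun h => ih.1 (not_not.1 ((Pos_not φ).not.1 h))⟩
  | and φ ψ ih1 ih2 =>
    constructor
    · intro h
      rw [cogen_and, orStar, val_or]
      rcases (Pos_and φ ψ).1 h with h | h
      · rw [val_exAll_univ (ih1.1 h), Set.univ_union]
      · rw [val_exAll_univ (ih2.1 h), Set.union_univ]
    · intro h
      rw [not_iff_not.2 (Pos_and φ ψ), not_or] at h
      have hD : eqR (φ.and ψ) \ eqR ((gen rep φ).and (gen rep ψ)) = ∅ := by
        rw [(pos_eqco_triv (φ.and ψ)).2 (by rw [Pos_and]; tauto)]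
        exact Set.diff_eq_empty.mpr (refl_sub_eqR _)
      rw [gen_and, conjList_rep_empty hrep hD, val_and, val_and, ih1.2 h.1, ih2.2 h.2]
      simp [val_one]
  | or φ ψ ih1 ih2 =>
    constructor
    · intro h
      obtain ⟨h1, h2⟩ := (Pos_or φ ψ).1 h
      have hD : eqR ((Fml.not φ).and (Fml.not ψ)) \
          eqR ((cogen rep φ).and (cogen rep ψ)) = ∅ := by
        have he : eqR ((Fml.not φ).and (Fml.not ψ)) = idRel' := by
          rw [show eqR ((Fml.not φ).and (Fml.not ψ)) = EqGen (coeqR φ ∪ coeqR ψ) from rfl,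
            (pos_eqco_triv φ).1 h1, (pos_eqco_triv ψ).1 h2]
          exact EqGen_le_id (by simp)
        rw [he]
        exact Set.diff_eq_empty.mpr (refl_sub_eqR _)
      rw [cogen_or, conjList_rep_empty hrep hD, val_and, val_and, ih1.1 h1, ih2.1 h2]
      simp [val_one]
    · intro h
      rw [not_iff_not.2 (Pos_or φ ψ), not_and_or] at h
      rw [gen_or, orStar, val_or]
      rcases h with h | h
      · rw [val_exAll_univ (ih1.2 h), Set.univ_union]
      · rw [val_exAll_univ (ih2.2 h), Set.union_univ]
  | ex x φ ih =>
    constructor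
    · intro h
      rw [cogen_ex]
      apply Set.eq_univ_of_forall
      intro v
      refine ⟨v, ?_, fun _ _ => rfl⟩
      rw [ih.1 ((Pos_ex x φ).1 h)]
      trivial
    · intro h
      rw [gen_ex]
      apply Set.eq_univ_of_forall
      intro v
      refine ⟨v, ?_, fun _ _ => rfl⟩
      rw [ih.2 (fun hp => h ((Pos_ex x φ).2 hp))]
      trivial

end Lemmas4
section Lemmas5

open Fml

variable {M : Type} {I : ∀ r : R, Set (Fin (δ r) → M)}
variable [Fintype 𝒳] [LinearOrder 𝒳]
variable {rep : Set (𝒳 × 𝒳) → List (𝒳 × 𝒳)}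
variable {Y : ∀ r : R, Fin (δ r) → 𝒳} {Z : ∀ r : R, (Fin (δ r) → 𝒳) → Fin (δ r) → 𝒳}

/-! ### norm unfolding -/

theorem normF_one (ψ : Fml R δ 𝒳) : norm rep Y Z .one ψ = .one := rfl
theorem normF_rel (r : R) (x : Fin (δ r) → 𝒳) (ψ : Fml R δ 𝒳) :
    norm rep Y Z (.rel r x) ψ = canonAtom Y Z r x := rfl
theorem normF_eql (x₁ x₂ : 𝒳) (ψ : Fml R δ 𝒳) :
    norm rep Y Z (.eql x₁ x₂) ψ = .and ψ (.eql x₁ x₂) := rfl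
theorem normF_not (φ ψ : Fml R δ 𝒳) :
    norm rep Y Z φ.not ψ = _root_.compl (norm rep Y Z φ ψ) := rfl
theorem normF_and (φ₁ φ₂ ψ : Fml R δ 𝒳) :
    norm rep Y Z (φ₁.and φ₂) ψ = normAnd (norm rep Y Z φ₁ (exAll (FV ψ \ FV φ₁) ψ))
      (norm rep Y Z φ₂ (exAll (FV ψ \ FV φ₂) ψ)) ψ := rfl
theorem normF_or (φ₁ φ₂ ψ : Fml R δ 𝒳) :
    norm rep Y Z (φ₁.or φ₂) ψ =
      _root_.compl (normAnd (_root_.compl (norm rep Y Z φ₁ (exAll (FV ψ \ FV φ₁) ψ)))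
        (_root_.compl (norm rep Y Z φ₂ (exAll (FV ψ \ FV φ₂) ψ))) ψ) := rfl
theorem normF_ex (x : 𝒳) (φ₁ ψ : Fml R δ 𝒳) :
    norm rep Y Z (.ex x φ₁) ψ =
      .ex x (norm rep Y Z φ₁ (.and (exAll (FV (gen rep φ₁) \ {x}) (gen rep φ₁)) ψ)) := rfl

/-! ### normAnd branches -/

theorem normAnd_ff {α β ψ : Fml R δ 𝒳} (h1 : isNeg α = false) (h2 : isNeg β = false) :
    normAnd α β ψ = .and α β := by simp [normAnd, h1, h2]
theorem normAnd_ft {α β ψ : Fml R δ 𝒳} (h1 : isNeg α = false) (h2 : isNeg β = true) :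
    normAnd α β ψ = .and (align α ψ) (.not (align (_root_.compl β) ψ)) := by
  simp [normAnd, h1, h2]
theorem normAnd_tf {α β ψ : Fml R δ 𝒳} (h1 : isNeg α = true) (h2 : isNeg β = false) :
    normAnd α β ψ = .and (align β ψ) (.not (align (_root_.compl α) ψ)) := by
  simp [normAnd, h1, h2]
theorem normAnd_tt {α β ψ : Fml R δ 𝒳} (h1 : isNeg α = true) (h2 : isNeg β = true) :
    normAnd α β ψ = .not (.or (align (_root_.compl α) ψ) (align (_root_.compl β) ψ)) := by
  simp [normAnd, h1, h2]

theorem normAnd_le_left {α β ψ : Fml R δ 𝒳} (h1 : isNeg α = false) :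
    val I (normAnd α β ψ) ⊆ val I α := by
  cases h2 : isNeg β
  · rw [normAnd_ff h1 h2]; exact fun v hv => hv.1
  · rw [normAnd_ft h1 h2]; exact fun v hv => val_align_le _ _ hv.1

theorem normAnd_le_right {α β ψ : Fml R δ 𝒳} (h2 : isNeg β = false) :
    val I (normAnd α β ψ) ⊆ val I β := by
  cases h1 : isNeg α
  · rw [normAnd_ff h1 h2]; exact fun v hv => hv.2
  · rw [normAnd_tf h1 h2]; exact fun v hv => val_align_le _ _ hv.1

/-! ### shape of normalized formulas -/

theorem normShape (φ : Fml R δ 𝒳) (hok : ExOK φ) (ψ : Fml R δ 𝒳) :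
    (Positive φ → isNeg (norm rep Y Z φ ψ) = false) ∧
    (¬Positive φ → ∃ β, norm rep Y Z φ ψ = .not β ∧ isNeg β = false) := by
  induction φ generalizing ψ with
  | one => exact ⟨fun _ => rfl, fun h => absurd trivial h⟩
  | rel r x => exact ⟨fun _ => isNeg_canonAtom r x, fun h => absurd trivial h⟩
  | eql x y => exact ⟨fun _ => rfl, fun h => absurd trivial h⟩
  | not φ ih =>
    constructor
    · intro h
      obtain ⟨β, hβ, hβn⟩ := (ih hok ψ).2 ((Pos_not φ).1 h)
      rw [normF_not, hβ, compl_not']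
      exact hβn
    · intro h
      have hpos := not_not.1 ((Pos_not φ).not.1 h)
      have hn := (ih hok ψ).1 hpos
      exact ⟨norm rep Y Z φ ψ, by rw [normF_not, compl_of_isNeg_false hn], hn⟩
  | and φ₁ φ₂ ih1 ih2 =>
    set ψ₁ := exAll (FV ψ \ FV φ₁) ψ
    set ψ₂ := exAll (FV ψ \ FV φ₂) ψ
    by_cases h1 : Positive φ₁ <;> by_cases h2 : Positive φ₂
    · have hn1 := (ih1 hok.1 ψ₁).1 h1
      have hn2 := (ih2 hok.2 ψ₂).1 h2
      refine ⟨fun _ => ?_, fun h => absurd ((Pos_and φ₁ φ₂).2 (Or.inl h1)) h⟩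
      rw [normF_and, normAnd_ff hn1 hn2]; rfl
    · have hn1 := (ih1 hok.1 ψ₁).1 h1
      obtain ⟨β₂, hβ₂, _⟩ := (ih2 hok.2 ψ₂).2 h2
      refine ⟨fun _ => ?_, fun h => absurd ((Pos_and φ₁ φ₂).2 (Or.inl h1)) h⟩
      rw [normF_and, normAnd_ft hn1 (by rw [hβ₂]; rfl)]; rfl
    · obtain ⟨β₁, hβ₁, _⟩ := (ih1 hok.1 ψ₁).2 h1
      have hn2 := (ih2 hok.2 ψ₂).1 h2
      refine ⟨fun _ => ?_, fun h => absurd ((Pos_and φ₁ φ₂).2 (Or.inr h2)) h⟩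
      rw [normF_and, normAnd_tf (by rw [hβ₁]; rfl) hn2]; rfl
    · obtain ⟨β₁, hβ₁, _⟩ := (ih1 hok.1 ψ₁).2 h1
      obtain ⟨β₂, hβ₂, _⟩ := (ih2 hok.2 ψ₂).2 h2
      refine ⟨fun h => ?_, fun _ => ?_⟩
      · rcases (Pos_and φ₁ φ₂).1 h with h | h
        exacts [absurd h h1, absurd h h2]
      · rw [normF_and, normAnd_tt (by rw [hβ₁]; rfl) (by rw [hβ₂]; rfl)]
        exact ⟨_, rfl, rfl⟩
  | or φ₁ φ₂ ih1 ih2 =>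
    set ψ₁ := exAll (FV ψ \ FV φ₁) ψ
    set ψ₂ := exAll (FV ψ \ FV φ₂) ψ
    by_cases h1 : Positive φ₁ <;> by_cases h2 : Positive φ₂
    · have hn1 := (ih1 hok.1 ψ₁).1 h1
      have hn2 := (ih2 hok.2 ψ₂).1 h2
      refine ⟨fun _ => ?_, fun h => absurd ((Pos_or φ₁ φ₂).2 ⟨h1, h2⟩) h⟩
      rw [normF_or, normAnd_tt (isNeg_compl_of_false hn1) (isNeg_compl_of_false hn2),
        compl_not']
      rfl
    · obtain ⟨β₂, hβ₂, hβ₂n⟩ := (ih2 hok.2 ψ₂).2 h2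
      have hn1 := (ih1 hok.1 ψ₁).1 h1
      refine ⟨fun h => absurd ((Pos_or φ₁ φ₂).1 h).2 h2, fun _ => ?_⟩
      have hc2 : isNeg (_root_.compl (norm rep Y Z φ₂ ψ₂)) = false := by
        rw [hβ₂, compl_not']; exact hβ₂n
      rw [normF_or, normAnd_tf (isNeg_compl_of_false hn1) hc2,
        compl_of_isNeg_false (show isNeg (Fml.and _ _) = false from rfl)]
      exact ⟨_, rfl, rfl⟩
    · obtain ⟨β₁, hβ₁, hβ₁n⟩ := (ih1 hok.1 ψ₁).2 h1
      have hn2 := (ih2 hok.2 ψ₂).1 h2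
      refine ⟨fun h => absurd ((Pos_or φ₁ φ₂).1 h).1 h1, fun _ => ?_⟩
      have hc1 : isNeg (_root_.compl (norm rep Y Z φ₁ ψ₁)) = false := by
        rw [hβ₁, compl_not']; exact hβ₁n
      rw [normF_or, normAnd_ft hc1 (isNeg_compl_of_false hn2),
        compl_of_isNeg_false (show isNeg (Fml.and _ _) = false from rfl)]
      exact ⟨_, rfl, rfl⟩
    · obtain ⟨β₁, hβ₁, hβ₁n⟩ := (ih1 hok.1 ψ₁).2 h1
      obtain ⟨β₂, hβ₂, hβ₂n⟩ := (ih2 hok.2 ψ₂).2 h2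
      refine ⟨fun h => absurd ((Pos_or φ₁ φ₂).1 h).1 h1, fun _ => ?_⟩
      have hc1 : isNeg (_root_.compl (norm rep Y Z φ₁ ψ₁)) = false := by
        rw [hβ₁, compl_not']; exact hβ₁n
      have hc2 : isNeg (_root_.compl (norm rep Y Z φ₂ ψ₂)) = false := by
        rw [hβ₂, compl_not']; exact hβ₂n
      rw [normF_or, normAnd_ff hc1 hc2,
        compl_of_isNeg_false (show isNeg (Fml.and _ _) = false from rfl)]
      exact ⟨_, rfl, rfl⟩
  | ex x φ₁ ih =>
    have hpos : Positive φ₁ := pos_of_mem_gen0 hok.1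
    exact ⟨fun _ => rfl, fun h => absurd ((Pos_ex x φ₁).2 hpos) h⟩

end Lemmas5
section Lemmas6

open Fml

variable {M : Type} {I : ∀ r : R, Set (Fin (δ r) → M)}
variable [Fintype 𝒳] [LinearOrder 𝒳]
variable {rep : Set (𝒳 × 𝒳) → List (𝒳 × 𝒳)}
variable {Y : ∀ r : R, Fin (δ r) → 𝒳} {Z : ∀ r : R, (Fin (δ r) → 𝒳) → Fin (δ r) → 𝒳}

/-! ### eq/coeq soundness for normalized formulas -/

theorem eqN (φ : Fml R δ 𝒳) (hok : ExOK φ) (ψ : Fml R δ 𝒳) :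
    (Positive φ → ∀ p ∈ eqR φ, val I (norm rep Y Z φ ψ) ⊆ diag p.1 p.2) ∧
    (¬Positive φ → ∀ p ∈ coeqR φ, (val I (norm rep Y Z φ ψ))ᶜ ⊆ diag p.1 p.2) := by
  induction φ generalizing ψ with
  | one =>
    exact ⟨fun _ p hp v _ => congrArg v (hp : p.1 = p.2), fun h => absurd trivial h⟩
  | rel r x =>
    exact ⟨fun _ p hp v _ => congrArg v (hp : p.1 = p.2), fun h => absurd trivial h⟩
  | eql x y =>
    refine ⟨fun _ => EqGen_diag ?_, fun h => absurd trivial h⟩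
    rintro p hp
    rw [Set.mem_singleton_iff] at hp
    subst hp
    exact fun v hv => hv.2
  | not φ ih =>
    constructor
    · intro h p hp
      rw [normF_not, val_compl]
      exact (ih hok ψ).2 ((Pos_not φ).1 h) p hp
    · intro h p hp
      rw [normF_not, val_compl, compl_compl]
      exact (ih hok ψ).1 (not_not.1 ((Pos_not φ).not.1 h)) p hp
  | and φ₁ φ₂ ih1 ih2 =>
    set ψ₁ := exAll (FV ψ \ FV φ₁) ψ with hψ₁def
    set ψ₂ := exAll (FV ψ \ FV φ₂) ψ with hψ₂def
    constructor
    · intro _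
      apply EqGen_diag
      rintro p (hp | hp)
      · by_cases h1 : Positive φ₁
        · intro v hv
          exact (ih1 hok.1 ψ₁).1 h1 p hp
            (normAnd_le_left ((normShape φ₁ hok.1 ψ₁).1 h1) hv)
        · have hp' : p ∈ eqR φ₁ := hp
          rw [(pos_eqco_triv φ₁).2 h1] at hp'
          exact fun v _ => congrArg v hp'
      · by_cases h2 : Positive φ₂
        · intro v hv
          exact (ih2 hok.2 ψ₂).1 h2 p hp
            (normAnd_le_right ((normShape φ₂ hok.2 ψ₂).1 h2) hv)
        · have hp' : p ∈ eqR φ₂ := hp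
          rw [(pos_eqco_triv φ₂).2 h2] at hp'
          exact fun v _ => congrArg v hp'
    · intro hneg p hp
      rw [not_iff_not.2 (Pos_and φ₁ φ₂), not_or] at hneg
      obtain ⟨β₁, hβ₁, _⟩ := (normShape (rep := rep) (Y := Y) (Z := Z) φ₁ hok.1 ψ₁).2 hneg.1
      obtain ⟨β₂, hβ₂, _⟩ := (normShape (rep := rep) (Y := Y) (Z := Z) φ₂ hok.2 ψ₂).2 hneg.2
      rw [normF_and, normAnd_tt (by rw [hβ₁]; rfl) (by rw [hβ₂]; rfl), val_not, compl_compl]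
      rintro v (hv | hv)
      · have h := val_align_le _ _ hv
        rw [val_compl] at h
        exact (ih1 hok.1 ψ₁).2 hneg.1 p hp.1 h
      · have h := val_align_le _ _ hv
        rw [val_compl] at h
        exact (ih2 hok.2 ψ₂).2 hneg.2 p hp.2 h
  | or φ₁ φ₂ ih1 ih2 =>
    set ψ₁ := exAll (FV ψ \ FV φ₁) ψ with hψ₁def
    set ψ₂ := exAll (FV ψ \ FV φ₂) ψ with hψ₂def
    constructor
    · intro hpos p hp
      obtain ⟨h1, h2⟩ := (Pos_or φ₁ φ₂).1 hpos
      have hn1 := (normShape (rep := rep) (Y := Y) (Z := Z) φ₁ hok.1 ψ₁).1 h1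
      have hn2 := (normShape (rep := rep) (Y := Y) (Z := Z) φ₂ hok.2 ψ₂).1 h2
      have hform : norm rep Y Z (φ₁.or φ₂) ψ =
          .or (align (norm rep Y Z φ₁ ψ₁) ψ) (align (norm rep Y Z φ₂ ψ₂) ψ) := by
        rw [normF_or, normAnd_tt (isNeg_compl_of_false hn1) (isNeg_compl_of_false hn2),
          compl_of_isNeg_false hn1, compl_of_isNeg_false hn2]
        simp only [compl_not']
      rw [hform]
      rintro v (hv | hv)
      · exact (ih1 hok.1 ψ₁).1 h1 p hp.1 (val_align_le _ _ hv)
      · exact (ih2 hok.2 ψ₂).1 h2 p hp.2 (val_align_le _ _ hv)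
    · intro hneg
      apply EqGen_diag
      rintro q (hq | hq)
      · by_cases h1 : Positive φ₁
        · have hq' : q ∈ coeqR φ₁ := hq
          rw [(pos_eqco_triv φ₁).1 h1] at hq'
          exact fun v _ => congrArg v hq'
        · obtain ⟨β₁, hβ₁, hβ₁n⟩ := (normShape (rep := rep) (Y := Y) (Z := Z) φ₁ hok.1 ψ₁).2 h1
          have hc1 : isNeg (_root_.compl (norm rep Y Z φ₁ ψ₁)) = false := by
            rw [hβ₁, compl_not']; exact hβ₁n
          intro v hv
          rw [normF_or, val_compl, compl_compl] at hv
          have hv2 := normAnd_le_left hc1 hv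
          rw [val_compl] at hv2
          exact (ih1 hok.1 ψ₁).2 h1 q hq hv2
      · by_cases h2 : Positive φ₂
        · have hq' : q ∈ coeqR φ₂ := hq
          rw [(pos_eqco_triv φ₂).1 h2] at hq'
          exact fun v _ => congrArg v hq'
        · obtain ⟨β₂, hβ₂, hβ₂n⟩ := (normShape (rep := rep) (Y := Y) (Z := Z) φ₂ hok.2 ψ₂).2 h2
          have hc2 : isNeg (_root_.compl (norm rep Y Z φ₂ ψ₂)) = false := by
            rw [hβ₂, compl_not']; exact hβ₂n
          intro v hv
          rw [normF_or, val_compl, compl_compl] at hv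
          have hv2 := normAnd_le_right hc2 hv
          rw [val_compl] at hv2
          exact (ih2 hok.2 ψ₂).2 h2 q hq hv2
  | ex x φ₁ ih =>
    have hpos1 : Positive φ₁ := pos_of_mem_gen0 hok.1
    refine ⟨fun _ => EqGen_diag ?_, fun h => absurd ((Pos_ex x φ₁).2 hpos1) h⟩
    rintro q ⟨hq, hq1, hq2⟩ v hv
    rw [normF_ex] at hv
    obtain ⟨u, hu, ha⟩ := hv
    have h := (ih hok.2 _).1 hpos1 q hq hu
    show v q.1 = v q.2
    rw [← ha q.1 hq1, ← ha q.2 hq2]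
    exact h

/-! ### gen/cogen bounds for normalized formulas -/

theorem FV_exArg {φ₁ : Fml R δ 𝒳} {x : 𝒳} {ψ : Fml R δ 𝒳}
    (hx1 : x ∈ FV φ₁) (hx2 : x ∈ FV (gen rep φ₁)) (hψ : FV ψ = FV (Fml.ex x φ₁)) :
    FV ((exAll (FV (gen rep φ₁) \ {x}) (gen rep φ₁)).and ψ) = FV φ₁ := by
  have h1 : FV ((exAll (FV (gen rep φ₁) \ {x}) (gen rep φ₁)).and ψ) =
      (FV (gen rep φ₁) \ (FV (gen rep φ₁) \ {x})) ∪ FV ψ := by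
    show FV (exAll _ _) ∪ FV ψ = _
    rw [FV_exAll]
  rw [h1, hψ, show FV (Fml.ex x φ₁) = FV φ₁ \ {x} from rfl]
  ext a
  by_cases hax : a = x
  · subst hax
    simp only [Finset.mem_union, Finset.mem_sdiff, Finset.mem_singleton]
    constructor
    · intro _; exact hx1
    · intro _
      refine Or.inl ⟨hx2, ?_⟩
      simp
  · simp only [Finset.mem_union, Finset.mem_sdiff, Finset.mem_singleton]
    constructor
    · rintro (⟨ha, hna⟩ | ⟨ha, _⟩)
      · exact absurd ⟨ha, hax⟩ hna
      · exact ha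
    · intro ha; exact Or.inr ⟨ha, hax⟩

theorem genN (hrep : MinRep rep) (hY : ∀ r, Function.Injective (Y r)) (hZ : GoodZ Y Z)
    (φ : Fml R δ 𝒳) (hok : ExOK φ) (ψ : Fml R δ 𝒳) (hψ : FV ψ = FV φ) :
    val I (norm rep Y Z φ ψ) ⊆ val I (gen rep φ) ∧
    (val I (norm rep Y Z φ ψ))ᶜ ⊆ val I (cogen rep φ) := by
  induction φ generalizing ψ with
  | one => exact ⟨fun v _ => trivial, fun v _ => trivial⟩
  | rel r x =>
    constructor
    · rw [normF_rel, val_canonAtom hY hZ]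
      exact le_rfl
    · exact fun v _ => trivial
  | eql x y => exact ⟨fun v _ => trivial, fun v _ => trivial⟩
  | not φ ih =>
    constructor
    · rw [normF_not, val_compl]
      exact (ih hok ψ hψ).2
    · rw [normF_not, val_compl, compl_compl]
      exact (ih hok ψ hψ).1
  | and φ₁ φ₂ ih1 ih2 =>
    have hsub1 : FV φ₁ ⊆ FV ψ := by rw [hψ]; exact Finset.subset_union_left
    have hsub2 : FV φ₂ ⊆ FV ψ := by rw [hψ]; exact Finset.subset_union_right
    have hψ1 : FV (exAll (FV ψ \ FV φ₁) ψ) = FV φ₁ := by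
      rw [FV_exAll]; ext a
      simp only [Finset.mem_sdiff]
      constructor
      · rintro ⟨ha, hna⟩; by_contra h; exact hna ⟨ha, h⟩
      · intro ha; exact ⟨hsub1 ha, fun h => h.2 ha⟩
    have hψ2 : FV (exAll (FV ψ \ FV φ₂) ψ) = FV φ₂ := by
      rw [FV_exAll]; ext a
      simp only [Finset.mem_sdiff]
      constructor
      · rintro ⟨ha, hna⟩; by_contra h; exact hna ⟨ha, h⟩
      · intro ha; exact ⟨hsub2 ha, fun h => h.2 ha⟩
    set ψ₁ := exAll (FV ψ \ FV φ₁) ψ with hψ₁def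
    set ψ₂ := exAll (FV ψ \ FV φ₂) ψ with hψ₂def
    constructor
    · intro v hv
      have hv' : v ∈ val I (normAnd (norm rep Y Z φ₁ ψ₁) (norm rep Y Z φ₂ ψ₂) ψ) := hv
      rw [gen_and, val_and, val_and]
      refine ⟨⟨?_, ?_⟩, mem_val_conjList.2 ?_⟩
      · by_cases h1 : Positive φ₁
        · exact (ih1 hok.1 ψ₁ hψ1).1 (normAnd_le_left ((normShape φ₁ hok.1 ψ₁).1 h1) hv')
        · rw [(pos_genco_univ hrep φ₁).2 h1]; trivial
      · by_cases h2 : Positive φ₂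
        · exact (ih2 hok.2 ψ₂ hψ2).1 (normAnd_le_right ((normShape φ₂ hok.2 ψ₂).1 h2) hv')
        · rw [(pos_genco_univ hrep φ₂).2 h2]; trivial
      · intro p hp
        by_cases hpos : Positive (φ₁.and φ₂)
        · have hp' : p ∈ eqR (φ₁.and φ₂) :=
            EqGen_diff_sub (φ₁.and φ₂) _ (pairsOf_rep_sub hrep _ hp)
          exact (eqN (φ₁.and φ₂) hok ψ).1 hpos p hp' hv
        · exfalso
          have hD : eqR (φ₁.and φ₂) \ eqR ((gen rep φ₁).and (gen rep φ₂)) = ∅ := by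
            rw [(pos_eqco_triv (φ₁.and φ₂)).2 hpos]
            exact Set.diff_eq_empty.mpr (refl_sub_eqR _)
          rw [hD, rep_EqGen_empty hrep] at hp
          exact List.not_mem_nil hp
    · intro v hv
      rw [cogen_and, orStar, val_or]
      by_cases h1 : Positive φ₁
      · exact Or.inl (by rw [val_exAll_univ ((pos_genco_univ hrep φ₁).1 h1)]; trivial)
      · by_cases h2 : Positive φ₂
        · exact Or.inr (by rw [val_exAll_univ ((pos_genco_univ hrep φ₂).1 h2)]; trivial)
        · obtain ⟨β₁, hβ₁, _⟩ := (normShape (rep := rep) (Y := Y) (Z := Z) φ₁ hok.1 ψ₁).2 h1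
          obtain ⟨β₂, hβ₂, _⟩ := (normShape (rep := rep) (Y := Y) (Z := Z) φ₂ hok.2 ψ₂).2 h2
          rw [normF_and, normAnd_tt (by rw [hβ₁]; rfl) (by rw [hβ₂]; rfl), val_not,
            compl_compl] at hv
          rcases hv with hv | hv
          · have h := val_align_le _ _ hv
            rw [val_compl] at h
            exact Or.inl (val_le_exAll _ _ ((ih1 hok.1 ψ₁ hψ1).2 h))
          · have h := val_align_le _ _ hv
            rw [val_compl] at h
            exact Or.inr (val_le_exAll _ _ ((ih2 hok.2 ψ₂ hψ2).2 h))
  | or φ₁ φ₂ ih1 ih2 =>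
    have hsub1 : FV φ₁ ⊆ FV ψ := by rw [hψ]; exact Finset.subset_union_left
    have hsub2 : FV φ₂ ⊆ FV ψ := by rw [hψ]; exact Finset.subset_union_right
    have hψ1 : FV (exAll (FV ψ \ FV φ₁) ψ) = FV φ₁ := by
      rw [FV_exAll]; ext a
      simp only [Finset.mem_sdiff]
      constructor
      · rintro ⟨ha, hna⟩; by_contra h; exact hna ⟨ha, h⟩
      · intro ha; exact ⟨hsub1 ha, fun h => h.2 ha⟩
    have hψ2 : FV (exAll (FV ψ \ FV φ₂) ψ) = FV φ₂ := by
      rw [FV_exAll]; ext a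
      simp only [Finset.mem_sdiff]
      constructor
      · rintro ⟨ha, hna⟩; by_contra h; exact hna ⟨ha, h⟩
      · intro ha; exact ⟨hsub2 ha, fun h => h.2 ha⟩
    set ψ₁ := exAll (FV ψ \ FV φ₁) ψ with hψ₁def
    set ψ₂ := exAll (FV ψ \ FV φ₂) ψ with hψ₂def
    constructor
    · intro v hv
      rw [gen_or, orStar, val_or]
      by_cases h1 : Positive φ₁
      · by_cases h2 : Positive φ₂
        · have hn1 := (normShape (rep := rep) (Y := Y) (Z := Z) φ₁ hok.1 ψ₁).1 h1
          have hn2 := (normShape (rep := rep) (Y := Y) (Z := Z) φ₂ hok.2 ψ₂).1 h2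
          have hform : norm rep Y Z (φ₁.or φ₂) ψ =
              .or (align (norm rep Y Z φ₁ ψ₁) ψ) (align (norm rep Y Z φ₂ ψ₂) ψ) := by
            rw [normF_or, normAnd_tt (isNeg_compl_of_false hn1) (isNeg_compl_of_false hn2),
              compl_of_isNeg_false hn1, compl_of_isNeg_false hn2]
            simp only [compl_not']
          rw [hform] at hv
          rcases hv with hv | hv
          · exact Or.inl (val_le_exAll _ _ ((ih1 hok.1 ψ₁ hψ1).1 (val_align_le _ _ hv)))
          · exact Or.inr (val_le_exAll _ _ ((ih2 hok.2 ψ₂ hψ2).1 (val_align_le _ _ hv)))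
        · exact Or.inr (by rw [val_exAll_univ ((pos_genco_univ hrep φ₂).2 h2)]; trivial)
      · exact Or.inl (by rw [val_exAll_univ ((pos_genco_univ hrep φ₁).2 h1)]; trivial)
    · intro v hv
      rw [normF_or, val_compl, compl_compl] at hv
      rw [cogen_or, val_and, val_and]
      refine ⟨⟨?_, ?_⟩, mem_val_conjList.2 ?_⟩
      · by_cases h1 : Positive φ₁
        · rw [(pos_genco_univ hrep φ₁).1 h1]; trivial
        · obtain ⟨β₁, hβ₁, hβ₁n⟩ := (normShape (rep := rep) (Y := Y) (Z := Z) φ₁ hok.1 ψ₁).2 h1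
          have hc1 : isNeg (_root_.compl (norm rep Y Z φ₁ ψ₁)) = false := by
            rw [hβ₁, compl_not']; exact hβ₁n
          have h := normAnd_le_left hc1 hv
          rw [val_compl] at h
          exact (ih1 hok.1 ψ₁ hψ1).2 h
      · by_cases h2 : Positive φ₂
        · rw [(pos_genco_univ hrep φ₂).1 h2]; trivial
        · obtain ⟨β₂, hβ₂, hβ₂n⟩ := (normShape (rep := rep) (Y := Y) (Z := Z) φ₂ hok.2 ψ₂).2 h2
          have hc2 : isNeg (_root_.compl (norm rep Y Z φ₂ ψ₂)) = false := by
            rw [hβ₂, compl_not']; exact hβ₂n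
          have h := normAnd_le_right hc2 hv
          rw [val_compl] at h
          exact (ih2 hok.2 ψ₂ hψ2).2 h
      · intro p hp
        by_cases hpos : Positive (φ₁.or φ₂)
        · exfalso
          have hD : eqR ((Fml.not φ₁).and (Fml.not φ₂)) \
              eqR ((cogen rep φ₁).and (cogen rep φ₂)) = ∅ := by
            have he : eqR ((Fml.not φ₁).and (Fml.not φ₂)) = idRel' := by
              rw [show eqR ((Fml.not φ₁).and (Fml.not φ₂)) =
                  EqGen (coeqR φ₁ ∪ coeqR φ₂) from rfl,
                (pos_eqco_triv φ₁).1 ((Pos_or φ₁ φ₂).1 hpos).1,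
                (pos_eqco_triv φ₂).1 ((Pos_or φ₁ φ₂).1 hpos).2]
              exact EqGen_le_id (by simp)
            rw [he]
            exact Set.diff_eq_empty.mpr (refl_sub_eqR _)
          rw [hD, rep_EqGen_empty hrep] at hp
          exact List.not_mem_nil hp
        · have hp' : p ∈ coeqR (φ₁.or φ₂) :=
            EqGen_diff_sub ((Fml.not φ₁).and (Fml.not φ₂)) _ (pairsOf_rep_sub hrep _ hp)
          have hvn : v ∈ (val I (norm rep Y Z (φ₁.or φ₂) ψ))ᶜ := by
            rw [normF_or, val_compl, compl_compl]
            exact hv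
          exact (eqN (φ₁.or φ₂) hok ψ).2 hpos p hp' hvn
  | ex x φ₁ ih =>
    obtain ⟨hx, hok1⟩ := hok
    have hx1 : x ∈ FV φ₁ := Finset.mem_coe.1 ((genco0_sub_FV φ₁).1 hx)
    have hx2 : x ∈ FV (gen rep φ₁) := Finset.mem_coe.1 ((genco0_sub_FV_gen hrep φ₁).1 hx)
    have hψ' : FV ((exAll (FV (gen rep φ₁) \ {x}) (gen rep φ₁)).and ψ) = FV φ₁ :=
      FV_exArg hx1 hx2 hψ
    constructor
    · rw [normF_ex, gen_ex]
      rintro v ⟨u, hu, ha⟩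
      exact ⟨u, (ih hok1 _ hψ').1 hu, ha⟩
    · rw [normF_ex, cogen_ex]
      intro v hv
      exact ⟨v, (ih hok1 _ hψ').2 (fun h => hv ⟨v, h, fun _ _ => rfl⟩), fun _ _ => rfl⟩

/-! ### the main normalization theorem -/

theorem mainAux (hrep : MinRep rep) (hY : ∀ r, Function.Injective (Y r)) (hZ : GoodZ Y Z)
    (φ : Fml R δ 𝒳) (hok : ExOK φ) (ψ : Fml R δ 𝒳) (hψ : FV ψ = FV φ) :
    val I (norm rep Y Z φ ψ) ∩ val I ψ = val I φ ∩ val I ψ := by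
  induction φ generalizing ψ with
  | one => rw [normF_one]
  | rel r x => rw [normF_rel, val_canonAtom hY hZ]
  | eql x y =>
    ext v
    rw [normF_eql]
    simp only [val_and, val_eql, Set.mem_inter_iff, Set.mem_setOf_eq]
    tauto
  | not φ ih =>
    have h := ih hok ψ hψ
    rw [normF_not, val_compl, val_not]
    ext v
    by_cases hv : v ∈ val I ψ
    · simp only [Set.mem_inter_iff, Set.mem_compl_iff, hv, and_true]
      have h2 := Set.ext_iff.1 h v
      simp only [Set.mem_inter_iff, hv, and_true] at h2
      exact not_congr h2
    · simp [hv]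
  | and φ₁ φ₂ ih1 ih2 =>
    have hsub1 : FV φ₁ ⊆ FV ψ := by rw [hψ]; exact Finset.subset_union_left
    have hsub2 : FV φ₂ ⊆ FV ψ := by rw [hψ]; exact Finset.subset_union_right
    have hψ1 : FV (exAll (FV ψ \ FV φ₁) ψ) = FV φ₁ := by
      rw [FV_exAll]; ext a
      simp only [Finset.mem_sdiff]
      constructor
      · rintro ⟨ha, hna⟩; by_contra h; exact hna ⟨ha, h⟩
      · intro ha; exact ⟨hsub1 ha, fun h => h.2 ha⟩
    have hψ2 : FV (exAll (FV ψ \ FV φ₂) ψ) = FV φ₂ := by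
      rw [FV_exAll]; ext a
      simp only [Finset.mem_sdiff]
      constructor
      · rintro ⟨ha, hna⟩; by_contra h; exact hna ⟨ha, h⟩
      · intro ha; exact ⟨hsub2 ha, fun h => h.2 ha⟩
    ext v
    by_cases hv : v ∈ val I ψ
    · simp only [Set.mem_inter_iff, hv, and_true]
      rw [normF_and, mem_normAnd hv]
      have e1 : v ∈ val I (norm rep Y Z φ₁ (exAll (FV ψ \ FV φ₁) ψ)) ↔ v ∈ val I φ₁ := by
        have h2 := Set.ext_iff.1 (ih1 hok.1 _ hψ1) v
        have hvψ1 : v ∈ val I (exAll (FV ψ \ FV φ₁) ψ) := val_le_exAll _ _ hv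
        simp only [Set.mem_inter_iff, hvψ1, and_true] at h2
        exact h2
      have e2 : v ∈ val I (norm rep Y Z φ₂ (exAll (FV ψ \ FV φ₂) ψ)) ↔ v ∈ val I φ₂ := by
        have h2 := Set.ext_iff.1 (ih2 hok.2 _ hψ2) v
        have hvψ2 : v ∈ val I (exAll (FV ψ \ FV φ₂) ψ) := val_le_exAll _ _ hv
        simp only [Set.mem_inter_iff, hvψ2, and_true] at h2
        exact h2
      rw [e1, e2]
      exact Iff.rfl
    · simp only [Set.mem_inter_iff, hv, and_false]
  | or φ₁ φ₂ ih1 ih2 =>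
    have hsub1 : FV φ₁ ⊆ FV ψ := by rw [hψ]; exact Finset.subset_union_left
    have hsub2 : FV φ₂ ⊆ FV ψ := by rw [hψ]; exact Finset.subset_union_right
    have hψ1 : FV (exAll (FV ψ \ FV φ₁) ψ) = FV φ₁ := by
      rw [FV_exAll]; ext a
      simp only [Finset.mem_sdiff]
      constructor
      · rintro ⟨ha, hna⟩; by_contra h; exact hna ⟨ha, h⟩
      · intro ha; exact ⟨hsub1 ha, fun h => h.2 ha⟩
    have hψ2 : FV (exAll (FV ψ \ FV φ₂) ψ) = FV φ₂ := by
      rw [FV_exAll]; ext a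
      simp only [Finset.mem_sdiff]
      constructor
      · rintro ⟨ha, hna⟩; by_contra h; exact hna ⟨ha, h⟩
      · intro ha; exact ⟨hsub2 ha, fun h => h.2 ha⟩
    ext v
    by_cases hv : v ∈ val I ψ
    · simp only [Set.mem_inter_iff, hv, and_true]
      have e1 : v ∈ val I (norm rep Y Z φ₁ (exAll (FV ψ \ FV φ₁) ψ)) ↔ v ∈ val I φ₁ := by
        have h2 := Set.ext_iff.1 (ih1 hok.1 _ hψ1) v
        have hvψ1 : v ∈ val I (exAll (FV ψ \ FV φ₁) ψ) := val_le_exAll _ _ hv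
        simp only [Set.mem_inter_iff, hvψ1, and_true] at h2
        exact h2
      have e2 : v ∈ val I (norm rep Y Z φ₂ (exAll (FV ψ \ FV φ₂) ψ)) ↔ v ∈ val I φ₂ := by
        have h2 := Set.ext_iff.1 (ih2 hok.2 _ hψ2) v
        have hvψ2 : v ∈ val I (exAll (FV ψ \ FV φ₂) ψ) := val_le_exAll _ _ hv
        simp only [Set.mem_inter_iff, hvψ2, and_true] at h2
        exact h2
      rw [normF_or, val_compl, Set.mem_compl_iff, mem_normAnd hv, val_compl, val_compl,
        Set.mem_compl_iff, Set.mem_compl_iff, e1, e2]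
      show ¬(¬v ∈ val I φ₁ ∧ ¬v ∈ val I φ₂) ↔ v ∈ val I φ₁ ∨ v ∈ val I φ₂
      tauto
    · simp only [Set.mem_inter_iff, hv, and_false]
  | ex x φ₁ ih =>
    obtain ⟨hx, hok1⟩ := hok
    have hx1 : x ∈ FV φ₁ := Finset.mem_coe.1 ((genco0_sub_FV φ₁).1 hx)
    have hx2 : x ∈ FV (gen rep φ₁) := Finset.mem_coe.1 ((genco0_sub_FV_gen hrep φ₁).1 hx)
    have hψ' : FV ((exAll (FV (gen rep φ₁) \ {x}) (gen rep φ₁)).and ψ) = FV φ₁ :=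
      FV_exArg hx1 hx2 hψ
    have hxψ : x ∉ FV ψ := by
      rw [hψ, show FV (Fml.ex x φ₁) = FV φ₁ \ {x} from rfl]
      simp
    set χ := exAll (FV (gen rep φ₁) \ {x}) (gen rep φ₁) with hχdef
    have hgen_le_χ : val I (gen rep φ₁) ⊆ val I χ := val_le_exAll _ _
    have hIH := ih hok1 (χ.and ψ) hψ'
    rw [normF_ex]
    ext v
    simp only [Set.mem_inter_iff]
    constructor
    · rintro ⟨⟨u, hu, ha⟩, hvψ⟩
      have huψ : u ∈ val I ψ :=
        (val_agree ψ (fun y hy => ha y (fun hxy => hxψ (hxy ▸ hy)))).2 hvψ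
      have huχ : u ∈ val I χ := hgen_le_χ ((genN hrep hY hZ φ₁ hok1 _ hψ').1 hu)
      have hu2 : u ∈ val I φ₁ :=
        ((Set.ext_iff.1 hIH u).1 ⟨hu, ⟨huχ, huψ⟩⟩).1
      exact ⟨⟨u, hu2, ha⟩, hvψ⟩
    · rintro ⟨⟨u, hu, ha⟩, hvψ⟩
      have huψ : u ∈ val I ψ :=
        (val_agree ψ (fun y hy => ha y (fun hxy => hxψ (hxy ▸ hy)))).2 hvψ
      have huχ : u ∈ val I χ := hgen_le_χ ((gen_sound hrep φ₁).1 hu)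
      have hu2 : u ∈ val I (norm rep Y Z φ₁ (χ.and ψ)) :=
        ((Set.ext_iff.1 hIH u).2 ⟨hu, ⟨huχ, huψ⟩⟩).1
      exact ⟨⟨u, hu2, ha⟩, hvψ⟩

end Lemmas6

theorem stmt17 {R : Type} [Fintype R] {δ : R → ℕ} {𝒳 : Type} [Fintype 𝒳]
    [LinearOrder 𝒳] (rep : Set (𝒳 × 𝒳) → List (𝒳 × 𝒳)) (hrep : MinRep rep)
    (Y : ∀ r : R, Fin (δ r) → 𝒳) (hY : ∀ r, Function.Injective (Y r))
    (Z : ∀ r : R, (Fin (δ r) → 𝒳) → Fin (δ r) → 𝒳) (hZ : GoodZ Y Z)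
    (φ ψ : Fml R δ 𝒳) (hφ : Allowed φ) (hψ : Normalized Y ψ)
    (hFV : FV ψ = FV φ)
    (M : Type) [Fintype M] [Nonempty M] (I : ∀ r : R, Set (Fin (δ r) → M)) :
    val I (norm rep Y Z φ ψ) ∩ val I ψ = val I φ ∩ val I ψ := by
  exact mainAux hrep hY hZ φ hφ.2 ψ hFV
end
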